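/- arXiv:1710.06176 — 4 statements merged into one kernel-verified Lean document; each statement's English description precedes it below -/
import Mathlib

section
/- For every continuously differentiable function f on [0,R] with f(R)=0, one has ∫₀^R |f'(r)|² r dr ≥ (1/(4R)) ∫₀^R |f(r)|² dr. (Note ∫₀^R (|f(r)|²/r) r dr = ∫₀^R |f(r)|² dr.) -/
/-!
Expanding `0 ≤ ‖2R f' + f‖² r` and bounding `r ≤ R` in the last term gives the
pointwise bound `‖f'‖² r ≥ -⟪f', f⟫ r / R - ‖f‖² / (4R)` on `[0, R]`. Integrating,
the cross term is handled by parts: `(‖f‖²)' = 2⟪f', f⟫`, and the boundary terms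
vanish because of the weight `r` at `0` and `f R = 0` at `R`, so
`∫₀ᴿ ⟪f', f⟫ r = -½ ∫₀ᴿ ‖f‖²`.
-/

open MeasureTheory intervalIntegral

section

variable {E : Type*} [NormedAddCommGroup E] [InnerProductSpace ℝ E]

theorem neg_inner_mul_div_sub_le_norm_sq_mul (u v : E) {r R : ℝ} (hR : 0 < R)
    (hr : r ∈ Set.Icc 0 R) :
    -(inner ℝ u v * r) / R - ‖v‖ ^ 2 / (4 * R) ≤ ‖u‖ ^ 2 * r := by
  have hsq : 0 ≤ ‖(2 * R) • u + v‖ ^ 2 * r := by have := hr.1; positivity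
  rw [norm_add_sq_real, norm_smul, inner_smul_left, Real.norm_of_nonneg (by positivity)] at hsq
  have hv : ‖v‖ ^ 2 * r ≤ ‖v‖ ^ 2 * R := by gcongr; exact hr.2
  rw [div_sub_div _ _ hR.ne' (by positivity), div_le_iff₀ (by positivity)]
  simp only [RCLike.conj_to_real] at hsq
  nlinarith

theorem integral_inner_deriv_self_mul {f : ℝ → E} (hf : ContDiff ℝ 1 f) (a b : ℝ) :
    ∫ r in a..b, inner ℝ (deriv f r) (f r) * r =
      (b * ‖f b‖ ^ 2 - a * ‖f a‖ ^ 2 - ∫ r in a..b, ‖f r‖ ^ 2) / 2 := by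
  have hparts := integral_mul_deriv_eq_deriv_mul (a := a) (b := b) (u := id) (u' := fun _ => 1)
    (v := (‖f ·‖ ^ 2)) (v' := fun r => 2 * inner ℝ (f r) (deriv f r))
    (fun r _ => hasDerivAt_id r)
    (fun r _ => ((hf.differentiable one_ne_zero) r).hasDerivAt.norm_sq)
    (continuous_const.intervalIntegrable a b)
    ((continuous_const.mul (hf.continuous.inner (hf.continuous_deriv le_rfl))).intervalIntegrable
      a b)
  simp only [id, one_mul] at hparts
  rw [← hparts, ← intervalIntegral.integral_div]
  refine integral_congr fun r _ => ?_
  simp only [real_inner_comm (f r)]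
  ring

end

/-- One-dimensional weighted Hardy–Poincaré inequality: for `f` of class `C¹`
with `f R = 0`, `∫₀ᴿ |f'(r)|² r dr ≥ (1/(4R)) ∫₀ᴿ |f(r)|² dr`. -/
theorem stmt_0 (R : ℝ) (hR : 0 < R) (f : ℝ → ℂ)
    (hf : ContDiff ℝ 1 f) (hfR : f R = 0) :
    (∫ r in (0:ℝ)..R, ‖deriv f r‖ ^ 2 * r) ≥
      (1 / (4 * R)) * ∫ r in (0:ℝ)..R, ‖f r‖ ^ 2 := by
  have hf' := hf.continuous_deriv le_rfl
  have hcross : Continuous fun r => -(inner ℝ (deriv f r) (f r) * r) / R :=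
    ((hf'.inner hf.continuous).mul continuous_id).neg.div_const R
  have hnorm : Continuous fun r => ‖f r‖ ^ 2 / (4 * R) := (hf.continuous.norm.pow 2).div_const _
  calc (1 / (4 * R)) * ∫ r in (0:ℝ)..R, ‖f r‖ ^ 2
      = ∫ r in (0:ℝ)..R, (-(inner ℝ (deriv f r) (f r) * r) / R - ‖f r‖ ^ 2 / (4 * R)) :=
        by
        rw [integral_sub (hcross.intervalIntegrable _ _) (hnorm.intervalIntegrable _ _),
          intervalIntegral.integral_div, intervalIntegral.integral_div,
          intervalIntegral.integral_neg,
          integral_inner_deriv_self_mul hf, hfR, norm_zero]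
        field_simp
        ring
    _ ≤ ∫ r in (0:ℝ)..R, ‖deriv f r‖ ^ 2 * r :=
        integral_mono_on hR.le ((hcross.sub hnorm).intervalIntegrable _ _)
          (((hf'.norm.pow 2).mul continuous_id).intervalIntegrable _ _)
          fun r hr => neg_inner_mul_div_sub_le_norm_sq_mul _ _ hR hr
end

section
/- For every smooth compactly supported function ψ on the open disk D_R of radius R centred at the origin in ℝ², one has ∫_{D_R} |∇ψ(x)|² dx ≥ (1/(4R)) ∫_{D_R} |ψ(x)|²/|x| dx. -/
open MeasureTheory

open MeasureTheory RealInnerProductSpace Set Topology Filter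
set_option maxHeartbeats 1000000

local notation "EE" => EuclideanSpace ℝ (Fin 2)

lemma norm_coord_le (x : EE) (i : Fin 2) : |x i| ≤ ‖x‖ := by
  have h1 : ‖x‖^2 = ∑ j, x j ^2 := by
    rw [EuclideanSpace.norm_eq, Real.sq_sqrt (by positivity)]; simp [sq_abs]
  have h2 : x i ^ 2 ≤ ∑ j, x j ^2 := by
    apply Finset.single_le_sum (f := fun j => x j ^2) (fun j _ => by positivity) (Finset.mem_univ i)
  nlinarith [abs_nonneg (x i), norm_nonneg x, sq_abs (x i)]

lemma fderiv_zero_of_nmem {F : Type*} [NormedAddCommGroup F] [NormedSpace ℝ F]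
    (w : EE → F) (x : EE) (h : x ∉ tsupport w) :
    fderiv ℝ w x = 0 := by
  have : w =ᶠ[nhds x] 0 := notMem_tsupport_iff_eventuallyEq.mp h
  rw [this.fderiv_eq]; exact fderiv_const_apply 0

lemma divergence_integral_zero (w : EE → EE) (hdiff : Differentiable ℝ w)
    (hcont : Continuous fun x => ∑ i, fderiv ℝ w x (EuclideanSpace.single i 1) i)
    (hc : HasCompactSupport w) :
    ∫ x : EE, ∑ i, fderiv ℝ w x (EuclideanSpace.single i 1) i = 0 := by
  obtain ⟨M, hM0, hMsupp⟩ : ∃ M : ℝ, 0 ≤ M ∧ tsupport w ⊆ Metric.closedBall 0 M := by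
    obtain ⟨M, hM⟩ := hc.isCompact.isBounded.subset_closedBall 0
    exact ⟨max M 0, le_max_right _ _, hM.trans (Metric.closedBall_subset_closedBall (le_max_left _ _))⟩
  set L : EE ≃L[ℝ] (Fin 2 → ℝ) := PiLp.continuousLinearEquiv 2 ℝ (fun _ : Fin 2 => ℝ) with hL
  set a : Fin 2 → ℝ := fun _ => -(M+1) with ha
  set b : Fin 2 → ℝ := fun _ => (M+1) with hb
  have hle : a ≤ b := fun i => by simp [ha, hb]; linarith
  set F : (Fin 2 → ℝ) → (Fin 2 → ℝ) := fun y => L (w (L.symm y)) with hF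
  set F' : (Fin 2 → ℝ) → (Fin 2 → ℝ) →L[ℝ] (Fin 2 → ℝ) :=
    fun y => ((L : EE →L[ℝ] (Fin 2 → ℝ)).comp (fderiv ℝ w (L.symm y))).comp
      (L.symm : (Fin 2 → ℝ) →L[ℝ] EE) with hF'
  have hder : ∀ y : (Fin 2 → ℝ), HasFDerivAt F (F' y) y := by
    intro y
    exact (L.hasFDerivAt.comp _ ((hdiff _).hasFDerivAt)).comp y L.symm.hasFDerivAt
  have hdiv_eq : ∀ y, (∑ i, F' y (Pi.single i 1) i)
      = ∑ i, fderiv ℝ w (L.symm y) (EuclideanSpace.single i 1) i := by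
    intro y; rfl
  have hFcont : Continuous F := L.continuous.comp (hdiff.continuous.comp L.symm.continuous)
  have hdivcont : Continuous fun y => ∑ i, F' y (Pi.single i 1) i := by
    have : (fun y => ∑ i, F' y (Pi.single i 1) i)
        = (fun x => ∑ i, fderiv ℝ w x (EuclideanSpace.single i 1) i) ∘
          (fun y : Fin 2 → ℝ => L.symm y) := rfl
    rw [this]
    exact hcont.comp L.symm.continuous
  have hzero : ∀ z : EE, M < ‖z‖ → w z = 0 := by
    intro z hz
    apply image_eq_zero_of_notMem_tsupport
    intro hmem
    have := hMsupp hmem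
    simp [Metric.mem_closedBall, dist_zero_right] at this
    linarith
  have hfzero : ∀ z : EE, M < ‖z‖ → fderiv ℝ w z = 0 := by
    intro z hz
    apply fderiv_zero_of_nmem
    intro hmem
    have := hMsupp hmem
    rw [Metric.mem_closedBall, dist_zero_right] at this
    linarith
  have key := MeasureTheory.integral_divergence_of_hasFDerivAt_off_countable
    (n := 1) a b hle F F' ∅ countable_empty hFcont.continuousOn
    (fun y _ => hder y) (hdivcont.continuousOn.integrableOn_compact isCompact_Icc)
  -- boundary terms vanish
  have hbdry : ∀ (i : Fin 2) (c : ℝ), M < |c| →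
      ∀ x : Fin 1 → ℝ, F (i.insertNth c x) i = 0 := by
    intro i c hc x
    have h1 : (L.symm (i.insertNth c x)) i = c := by
      rw [hL]; simp
    have h2 : M < ‖L.symm (i.insertNth c x)‖ := by
      calc M < |c| := hc
        _ = |(L.symm (i.insertNth c x)) i| := by rw [h1]
        _ ≤ ‖L.symm (i.insertNth c x)‖ := norm_coord_le _ i
    show (L (w (L.symm (i.insertNth c x)))) i = 0
    rw [hzero _ h2]
    simp
  rw [Finset.sum_eq_zero (fun i _ => ?_)] at key
  swap
  · have e1 : (∫ x in Icc (a ∘ i.succAbove) (b ∘ i.succAbove), F (i.insertNth (b i) x) i) = 0 := by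
      rw [setIntegral_congr_fun measurableSet_Icc (g := fun _ => 0) fun x _ => ?_, integral_zero]
      exact hbdry i (b i) (by simp [hb]; rw [abs_of_nonneg (by linarith)]; linarith) x
    have e2 : (∫ x in Icc (a ∘ i.succAbove) (b ∘ i.succAbove), F (i.insertNth (a i) x) i) = 0 := by
      rw [setIntegral_congr_fun measurableSet_Icc (g := fun _ => 0) fun x _ => ?_, integral_zero]
      exact hbdry i (a i) (by simp [ha]; rw [abs_of_nonpos (by linarith)]; linarith) x
    rw [e1, e2, sub_zero]
  -- extend from box to whole space
  have hext : (∫ y in Icc a b, ∑ i, F' y (Pi.single i 1) i)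
      = ∫ y, ∑ i, F' y (Pi.single i 1) i := by
    apply setIntegral_eq_integral_of_forall_compl_eq_zero
    intro y hy
    rw [hdiv_eq]
    have : ∃ i, M < |y i| := by
      by_contra hcon
      push_neg at hcon
      refine hy (Set.mem_Icc.mpr ⟨fun i => ?_, fun i => ?_⟩) <;>
      · have := abs_le.mp ((hcon i).trans (by linarith : M ≤ M+1))
        simp only [ha, hb]
        linarith [this.1, this.2]
    obtain ⟨i, hi⟩ := this
    have h2 : M < ‖L.symm y‖ := lt_of_lt_of_le hi (norm_coord_le (L.symm y) i)
    rw [hfzero _ h2]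
    simp
  have htrans : (∫ y, ∑ i, F' y (Pi.single i 1) i)
      = ∫ x : EE, ∑ i, fderiv ℝ w x (EuclideanSpace.single i 1) i := by
    rw [show (fun y => ∑ i, F' y (Pi.single i 1) i)
        = (fun x : EE => ∑ i, fderiv ℝ w x (EuclideanSpace.single i 1) i) ∘
          (MeasurableEquiv.toLp 2 (Fin 2 → ℝ)) from rfl]
    exact (PiLp.volume_preserving_toLp (Fin 2)).integral_comp
      (MeasurableEquiv.toLp 2 (Fin 2 → ℝ)).measurableEmbedding
      (fun x : EE => ∑ i, fderiv ℝ w x (EuclideanSpace.single i 1) i)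
  rw [← htrans, ← hext, key]

lemma norm_clm_apply_le (T : EE →L[ℝ] ℂ) (x : EE) :
    ‖T x‖ ≤ ‖x‖ * Real.sqrt (∑ i, ‖T (EuclideanSpace.single i 1)‖^2) := by
  have hx : x = x 0 • EuclideanSpace.single 0 (1:ℝ) + x 1 • EuclideanSpace.single 1 (1:ℝ) := by
    have := (show x = ∑ i, x i • EuclideanSpace.single i (1:ℝ) by
      ext j; fin_cases j <;> simp [EuclideanSpace.single_apply])
    rwa [Fin.sum_univ_two] at this
  set c := ‖T (EuclideanSpace.single 0 (1:ℝ))‖ with hc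
  set d := ‖T (EuclideanSpace.single 1 (1:ℝ))‖ with hd
  have h1 : ‖T x‖ ≤ |x 0| * c + |x 1| * d := by
    conv_lhs => rw [hx]
    rw [map_add, T.map_smul, T.map_smul]
    refine (norm_add_le _ _).trans ?_
    rw [norm_smul, norm_smul]
    simp [Real.norm_eq_abs, hc, hd]
  have hsum : (∑ i, ‖T (EuclideanSpace.single i 1)‖^2) = c^2 + d^2 := by
    rw [Fin.sum_univ_two]
  rw [hsum]
  have hnx : ‖x‖ = Real.sqrt ((x 0)^2 + (x 1)^2) := by
    rw [EuclideanSpace.norm_eq, Fin.sum_univ_two]; simp [sq_abs]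
  rw [hnx]
  refine h1.trans ?_
  set q := Real.sqrt ((x 0)^2 + (x 1)^2) with hq
  set r := Real.sqrt (c^2 + d^2) with hr
  have hq0 : 0 ≤ q := Real.sqrt_nonneg _
  have hr0 : 0 ≤ r := Real.sqrt_nonneg _
  have hq2 : q^2 = (x 0)^2 + (x 1)^2 := Real.sq_sqrt (by positivity)
  have hr2 : r^2 = c^2 + d^2 := Real.sq_sqrt (by positivity)
  have hc0 : 0 ≤ c := norm_nonneg _
  have hd0 : 0 ≤ d := norm_nonneg _
  have key : (|x 0| * c + |x 1| * d)^2 ≤ (q * r)^2 := by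
    have e : (q*r)^2 = ((x 0)^2 + (x 1)^2) * (c^2 + d^2) := by
      rw [mul_pow, hq2, hr2]
    rw [e]
    nlinarith [sq_nonneg (|x 0| * d - |x 1| * c), sq_abs (x 0), sq_abs (x 1)]
  have h2 : 0 ≤ |x 0| * c + |x 1| * d := by positivity
  nlinarith [mul_nonneg hq0 hr0]

lemma sum_apply_single (T : EE →L[ℝ] ℝ) (z : EE) :
    ∑ i, T (EuclideanSpace.single i 1) * z i = T z := by
  have hz : z = ∑ i, z i • EuclideanSpace.single i (1:ℝ) := by
    ext j; fin_cases j <;> simp [EuclideanSpace.single_apply]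
  conv_rhs => rw [hz, map_sum]
  refine Finset.sum_congr rfl fun i _ => ?_
  rw [T.map_smul]; simp [mul_comm]

lemma norm_sq_eq_sum_coord (x : EE) : ‖x‖^2 = ∑ i, (x i)^2 := by
  rw [EuclideanSpace.norm_eq, Real.sq_sqrt (by positivity)]
  simp [sq_abs]

lemma key_delta (R : ℝ) (hR : 0 < R) (ψ : EE → ℂ)
    (hψ : ContDiff ℝ (⊤ : ℕ∞) ψ) (hcs : HasCompactSupport ψ)
    (hsupp : tsupport ψ ⊆ Metric.ball 0 R) (δ : ℝ) (hδ : 0 < δ) :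
    ∫ x : EE, ‖ψ x‖^2 / Real.sqrt (‖x‖^2 + δ^2)
      ≤ 4 * R * ∫ x : EE, ∑ i, ‖fderiv ℝ ψ x (EuclideanSpace.single i 1)‖^2 := by
  set s : EE → ℝ := fun x => Real.sqrt (‖x‖^2 + δ^2) with hs_def
  have hspos : ∀ x, 0 < s x := fun x => Real.sqrt_pos.mpr (by positivity)
  have hsge : ∀ x, ‖x‖ ≤ s x := by
    intro x
    rw [show ‖x‖ = Real.sqrt (‖x‖^2) from (Real.sqrt_sq (norm_nonneg x)).symm]
    exact Real.sqrt_le_sqrt (by nlinarith)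
  have hs2 : ∀ x, (s x)^2 = ‖x‖^2 + δ^2 := fun x => Real.sq_sqrt (by positivity)
  set g : EE → ℝ := fun x => ‖ψ x‖^2 with hg_def
  set V : EE → EE := fun x => (s x)⁻¹ • x with hV_def
  set c : EE → ℝ := fun x => -(1/(2 * s x)) / (s x)^2 with hc_def
  set Vp : EE → EE →L[ℝ] EE := fun x =>
    (s x)⁻¹ • ContinuousLinearMap.id ℝ (EuclideanSpace ℝ (Fin 2)) +
    ((c x) • (2 • innerSL ℝ x)).smulRight x with hVp_def
  have hV : ∀ x, HasFDerivAt V (Vp x) x := by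
    intro x
    have hq : HasFDerivAt (fun y : EE => ‖y‖^2 + δ^2) (2 • innerSL ℝ x) x :=
      (hasStrictFDerivAt_norm_sq x).hasFDerivAt.add_const _
    have h0 : ‖x‖^2 + δ^2 ≠ 0 := by positivity
    have hsqrt : HasDerivAt (fun t : ℝ => (Real.sqrt t)⁻¹) (c x) (‖x‖^2 + δ^2) :=
      (Real.hasDerivAt_sqrt h0).inv (ne_of_gt (hspos x))
    have hinv : HasFDerivAt (fun y : EE => (s y)⁻¹) ((c x) • (2 • innerSL ℝ x)) x :=
      by have := hsqrt.comp_hasFDerivAt x hq; exact this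
    exact hinv.smul (hasFDerivAt_id x)
  have hVapp : ∀ x (i : Fin 2), Vp x (EuclideanSpace.single i 1) i
      = (s x)⁻¹ * (EuclideanSpace.single i (1:ℝ) i) + (c x * (2 * x i)) * x i := by
    intro x i
    rw [hVp_def]
    simp only [ContinuousLinearMap.add_apply, ContinuousLinearMap.smul_apply,
      ContinuousLinearMap.id_apply, ContinuousLinearMap.smulRight_apply,
      ContinuousLinearMap.coe_smul', Pi.smul_apply, innerSL_apply_apply]
    have hin : (inner ℝ x (EuclideanSpace.single i (1:ℝ)) : ℝ) = x i := by
      rw [EuclideanSpace.inner_single_right]; simp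
    rw [hin]
    simp only [PiLp.add_apply, PiLp.smul_apply, smul_eq_mul]
    ring
  have hVdiv : ∀ x, ∑ i, Vp x (EuclideanSpace.single i 1) i
      = 2 * (s x)⁻¹ + 2 * c x * ‖x‖^2 := by
    intro x
    rw [Fin.sum_univ_two, hVapp x 0, hVapp x 1, norm_sq_eq_sum_coord, Fin.sum_univ_two]
    simp [EuclideanSpace.single_apply]
    ring
  have hdivlow : ∀ x, (s x)⁻¹ ≤ 2 * (s x)⁻¹ + 2 * c x * ‖x‖^2 := by
    intro x
    have h1 := hspos x
    have h2 := hs2 x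
    simp only [hc_def]
    rw [← sub_nonneg]
    have e2 : 2 * (s x)⁻¹ + 2 * (-(1/(2 * s x)) / (s x)^2) * ‖x‖^2 - (s x)⁻¹
        = ((s x)^2 - ‖x‖^2) / (s x)^3 := by
      field_simp
      ring
    rw [e2, h2, show ‖x‖^2 + δ^2 - ‖x‖^2 = δ^2 by ring]
    positivity
  -- derivative of g
  have hg : ∀ x, HasFDerivAt g (2 • ((innerSL ℝ (ψ x)).comp (fderiv ℝ ψ x))) x :=
    fun x => ((hψ.differentiable (by simp) x).hasFDerivAt).norm_sq
  set w : EE → EE := fun x => g x • V x with hw_def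
  set Wp : EE → EE →L[ℝ] EE := fun x =>
    g x • Vp x + (2 • ((innerSL ℝ (ψ x)).comp (fderiv ℝ ψ x))).smulRight (V x) with hWp_def
  have hw : ∀ x, HasFDerivAt w (Wp x) x := fun x => (hg x).smul (hV x)
  set A : EE → ℝ := fun x => g x * (2 * (s x)⁻¹ + 2 * c x * ‖x‖^2) with hA_def
  set B : EE → ℝ := fun x => (s x)⁻¹ * (2 * ⟪ψ x, fderiv ℝ ψ x x⟫) with hB_def
  -- divergence of w
  have hdd : ∀ x, ∑ i, fderiv ℝ w x (EuclideanSpace.single i 1) i = A x + B x := by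
    intro x
    rw [(hw x).fderiv]
    have e1 : ∀ i : Fin 2, Wp x (EuclideanSpace.single i 1) i
        = g x * (Vp x (EuclideanSpace.single i 1) i)
          + ((2 • ((innerSL ℝ (ψ x)).comp (fderiv ℝ ψ x))) (EuclideanSpace.single i 1)) * (V x i) := by
      intro i
      rw [hWp_def]
      simp only [ContinuousLinearMap.add_apply, ContinuousLinearMap.smul_apply,
        ContinuousLinearMap.smulRight_apply, PiLp.add_apply, PiLp.smul_apply, smul_eq_mul]
    rw [Finset.sum_congr rfl (fun i _ => e1 i), Finset.sum_add_distrib, ← Finset.mul_sum, hVdiv]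
    rw [sum_apply_single ((2 • ((innerSL ℝ (ψ x)).comp (fderiv ℝ ψ x)))) (V x)]
    rw [hA_def, hB_def]
    have e2 : ((2 • ((innerSL ℝ (ψ x)).comp (fderiv ℝ ψ x)))) (V x)
        = (s x)⁻¹ * (2 * ⟪ψ x, fderiv ℝ ψ x x⟫) := by
      rw [hV_def]
      simp only [ContinuousLinearMap.smul_apply, ContinuousLinearMap.coe_comp',
        Function.comp_apply, innerSL_apply_apply, smul_eq_mul]
      rw [(fderiv ℝ ψ x).map_smul, real_inner_smul_right]
      ring
    rw [e2]
  -- continuity facts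
  have hscont : Continuous s := Real.continuous_sqrt.comp ((continuous_norm.pow 2).add continuous_const)
  have hsne : ∀ x, s x ≠ 0 := fun x => ne_of_gt (hspos x)
  have hgcont : Continuous g := (hψ.continuous.norm).pow 2
  have hDcont : Continuous fun x => fderiv ℝ ψ x := hψ.continuous_fderiv (by simp)
  have hccont : Continuous c := by
    rw [hc_def]
    exact ((continuous_const.div (continuous_const.mul hscont)
      (fun x => by have := hspos x; exact mul_ne_zero two_ne_zero this.ne')).neg).div (hscont.pow 2)
      (fun x => by have := hspos x; positivity)
  have hAcont : Continuous A := by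
    rw [hA_def]
    exact hgcont.mul ((continuous_const.mul (hscont.inv₀ hsne)).add
      ((continuous_const.mul hccont).mul (continuous_norm.pow 2)))
  have hBcont : Continuous B := by
    rw [hB_def]
    exact (hscont.inv₀ hsne).mul (continuous_const.mul
      (hψ.continuous.inner (hDcont.clm_apply continuous_id)))
  set P : EE → ℝ := fun x => ∑ i, ‖fderiv ℝ ψ x (EuclideanSpace.single i 1)‖^2 with hP_def
  have hPcont : Continuous P := by
    rw [hP_def]
    exact continuous_finset_sum _ fun i _ =>
      ((hDcont.clm_apply continuous_const).norm.pow 2)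
  set GS : EE → ℝ := fun x => g x / s x with hGS_def
  have hGScont : Continuous GS := hgcont.div hscont hsne
  -- vanishing outside tsupport ψ
  have hψzero : ∀ x ∉ tsupport ψ, ψ x = 0 := fun x hx => image_eq_zero_of_notMem_tsupport hx
  have hDzero : ∀ x ∉ tsupport ψ, fderiv ℝ ψ x = 0 := fun x hx => fderiv_zero_of_nmem ψ x hx
  have hgzero : ∀ x ∉ tsupport ψ, g x = 0 := fun x hx => by
    rw [hg_def]; simp [hψzero x hx]
  -- compact supports
  have hKA : HasCompactSupport A := HasCompactSupport.intro hcs (fun x hx => by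
    rw [hA_def]; simp [hgzero x hx])
  have hKB : HasCompactSupport B := HasCompactSupport.intro hcs (fun x hx => by
    rw [hB_def]; simp [hψzero x hx])
  have hKP : HasCompactSupport P := HasCompactSupport.intro hcs (fun x hx => by
    rw [hP_def]; simp [hDzero x hx])
  have hKGS : HasCompactSupport GS := HasCompactSupport.intro hcs (fun x hx => by
    rw [hGS_def]; simp [hgzero x hx])
  have hKw : HasCompactSupport w := HasCompactSupport.intro hcs (fun x hx => by
    rw [hw_def]; simp [hgzero x hx])
  -- integrability
  have hIntA : Integrable A := hAcont.integrable_of_hasCompactSupport hKA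
  have hIntB : Integrable B := hBcont.integrable_of_hasCompactSupport hKB
  have hIntP : Integrable P := hPcont.integrable_of_hasCompactSupport hKP
  have hIntGS : Integrable GS := hGScont.integrable_of_hasCompactSupport hKGS
  -- divergence theorem
  have hzero : ∫ x : EE, (A x + B x) = 0 := by
    rw [show (fun x : EE => A x + B x) = fun x => ∑ i, fderiv ℝ w x (EuclideanSpace.single i 1) i
      from funext fun x => (hdd x).symm]
    exact divergence_integral_zero w (fun x => (hw x).differentiableAt)
      (by rw [show (fun x => ∑ i, fderiv ℝ w x (EuclideanSpace.single i 1) i)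
            = fun x => A x + B x from funext hdd]
          exact hAcont.add hBcont) hKw
  -- the main pointwise estimate
  have hpt : ∀ x, -B x ≤ (1/2) * GS x + (2*R) * P x := by
    intro x
    have hP0 : 0 ≤ P x := Finset.sum_nonneg fun i _ => by positivity
    by_cases hx : x ∈ tsupport ψ
    · have hxR : ‖x‖ < R := by
        have := hsupp hx; rwa [Metric.mem_ball, dist_zero_right] at this
      set σ := s x with hσ
      set u := ‖ψ x‖ with hu
      set n := ‖x‖ with hn
      set p := Real.sqrt (P x) with hp
      have hσ0 : 0 < σ := hspos x
      have hu0 : 0 ≤ u := norm_nonneg _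
      have hn0 : 0 ≤ n := norm_nonneg _
      have hp0 : 0 ≤ p := Real.sqrt_nonneg _
      have hp2 : p^2 = P x := Real.sq_sqrt hP0
      have hnσ : n ≤ σ := hsge x
      have hDle : ‖(fderiv ℝ ψ x) x‖ ≤ n * p := by
        have h0 : Real.sqrt (∑ i, ‖fderiv ℝ ψ x (EuclideanSpace.single i 1)‖^2)
            = p := by rw [hp, hP_def]
        rw [hn, ← h0]
        exact norm_clm_apply_le (fderiv ℝ ψ x) x
      have hBle : -B x ≤ (2 * u * n * p) / σ := by
        have h2 : |(⟪ψ x, fderiv ℝ ψ x x⟫:ℝ)| ≤ u * (n * p) := by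
          refine (abs_real_inner_le_norm _ _).trans ?_
          exact mul_le_mul_of_nonneg_left hDle hu0
        have h1 : |(2:ℝ) * ⟪ψ x, fderiv ℝ ψ x x⟫| ≤ 2 * u * (n * p) := by
          rw [abs_mul, abs_two]; linarith
        have habs : |B x| ≤ (2*u*n*p)/σ := by
          have hBval : B x = σ⁻¹ * (2 * ⟪ψ x, fderiv ℝ ψ x x⟫) := rfl
          rw [hBval, abs_mul, abs_inv, abs_of_pos hσ0, div_eq_inv_mul]
          refine mul_le_mul_of_nonneg_left ?_ (inv_nonneg.mpr hσ0.le)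
          calc |2 * (⟪ψ x, fderiv ℝ ψ x x⟫:ℝ)| ≤ 2 * u * (n * p) := h1
            _ = 2*u*n*p := by ring
        exact (neg_le_abs _).trans habs
      refine hBle.trans ?_
      have hkey : 2 * u * n * p ≤ ((1/2) * GS x + (2*R) * P x) * σ := by
        have hGSx : GS x = u^2 / σ := by
          simp only [hGS_def, hg_def, ← hu, ← hσ]
        rw [hGSx, ← hp2]
        have hRσ : n * n ≤ R * σ := mul_le_mul hxR.le hnσ hn0 (le_of_lt hR)
        have e : ((1/2) * (u^2/σ) + (2*R) * p^2) * σ = (1/2) * u^2 + 2*R*p^2*σ := by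
          field_simp
        rw [e]
        nlinarith [sq_nonneg (u - 2*n*p), mul_nonneg (mul_nonneg hn0 hn0) (mul_nonneg hp0 hp0),
          mul_le_mul_of_nonneg_right hRσ (mul_nonneg hp0 hp0)]
      rw [div_le_iff₀ hσ0]
      exact hkey
    · have hB0 : B x = 0 := by rw [hB_def]; simp [hψzero x hx]
      rw [hB0, neg_zero]
      have h1 : 0 ≤ GS x := by
        rw [hGS_def, hg_def]
        positivity
      have h2 : 0 ≤ (2*R) * P x := by positivity
      linarith
  -- pointwise: GS ≤ A
  have hGSA : ∀ x, GS x ≤ A x := by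
    intro x
    simp only [hGS_def, hA_def]
    rw [div_eq_mul_inv]
    have hgx : 0 ≤ g x := by rw [hg_def]; positivity
    exact mul_le_mul_of_nonneg_left (hdivlow x) hgx
  -- put together
  have h1 : ∫ x, GS x ≤ ∫ x, A x := integral_mono hIntGS hIntA hGSA
  have h2 : (∫ x, A x) + ∫ x, B x = 0 := by rw [← integral_add hIntA hIntB]; exact hzero
  have h3 : ∫ x, (-B x) ≤ ∫ x, ((1/2) * GS x + (2*R) * P x) :=
    integral_mono hIntB.neg ((hIntGS.const_mul _).add (hIntP.const_mul _)) hpt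
  rw [integral_neg, integral_add (hIntGS.const_mul _) (hIntP.const_mul _),
    integral_const_mul, integral_const_mul] at h3
  have hfin : ∫ x, GS x ≤ 4 * R * ∫ x, P x := by linarith
  exact hfin


/-- Hardy–Poincaré inequality on the disk `D_R ⊆ ℝ²`:
`∫_{D_R} |∇ψ|² ≥ (1/(4R)) ∫_{D_R} |ψ|²/|x|` for `ψ ∈ C_c^∞(D_R)`. -/
theorem stmt_1 (R : ℝ) (hR : 0 < R)
    (ψ : EuclideanSpace ℝ (Fin 2) → ℂ)
    (hψ : ContDiff ℝ (⊤ : ℕ∞) ψ) (hcs : HasCompactSupport ψ)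
    (hsupp : tsupport ψ ⊆ Metric.ball 0 R) :
    (∫ x in Metric.ball (0 : EuclideanSpace ℝ (Fin 2)) R,
        ∑ i, ‖fderiv ℝ ψ x (EuclideanSpace.single i 1)‖ ^ 2) ≥
      (1 / (4 * R)) *
        ∫ x in Metric.ball (0 : EuclideanSpace ℝ (Fin 2)) R, ‖ψ x‖ ^ 2 / ‖x‖ := by
  have hDzero : ∀ x ∉ tsupport ψ, fderiv ℝ ψ x = 0 := fun x hx => fderiv_zero_of_nmem ψ x hx
  have hPz : ∀ x ∉ Metric.ball (0:EE) R,
      (∑ i, ‖fderiv ℝ ψ x (EuclideanSpace.single i 1)‖ ^ 2) = 0 := fun x hx => by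
    simp [hDzero x (fun h => hx (hsupp h))]
  have hLHS : (∫ x in Metric.ball (0:EE) R, ∑ i, ‖fderiv ℝ ψ x (EuclideanSpace.single i 1)‖ ^ 2)
      = ∫ x : EE, ∑ i, ‖fderiv ℝ ψ x (EuclideanSpace.single i 1)‖ ^ 2 :=
    setIntegral_eq_integral_of_forall_compl_eq_zero hPz
  have hg0 : ∀ x ∉ Metric.ball (0:EE) R, ‖ψ x‖^2/‖x‖ = 0 := fun x hx => by
    rw [image_eq_zero_of_notMem_tsupport (fun h => hx (hsupp h))]; simp
  have hRHSint : (∫ x in Metric.ball (0:EE) R, ‖ψ x‖ ^ 2 / ‖x‖)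
      = ∫ x : EE, ‖ψ x‖^2/‖x‖ :=
    setIntegral_eq_integral_of_forall_compl_eq_zero hg0
  have hD0 : 0 ≤ ∫ x : EE, ∑ i, ‖fderiv ℝ ψ x (EuclideanSpace.single i 1)‖ ^ 2 :=
    integral_nonneg (fun x => Finset.sum_nonneg fun i _ => by positivity)
  rw [ge_iff_le, hLHS, hRHSint]
  by_cases hInt : Integrable (fun x : EE => ‖ψ x‖^2/‖x‖)
  swap
  · rw [integral_undef hInt, mul_zero]
    exact hD0
  · have hbd : ∀ n : ℕ, (∫ x : EE, ‖ψ x‖^2 / Real.sqrt (‖x‖^2 + ((1:ℝ)/(n+1))^2))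
        ≤ 4*R* ∫ x : EE, ∑ i, ‖fderiv ℝ ψ x (EuclideanSpace.single i 1)‖ ^ 2 := by
      intro n
      exact key_delta R hR ψ hψ hcs hsupp _ (by positivity)
    have hae : ∀ᵐ x : EE, x ≠ 0 := by
      rw [ae_iff]
      have : {x : EE | ¬ x ≠ 0} = {0} := by ext y; simp
      rw [this]
      exact measure_singleton 0
    have hTend : Tendsto (fun n : ℕ => ∫ x : EE, ‖ψ x‖^2 / Real.sqrt (‖x‖^2 + ((1:ℝ)/(n+1))^2))
        atTop (𝓝 (∫ x : EE, ‖ψ x‖^2/‖x‖)) := by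
      apply tendsto_integral_of_dominated_convergence (bound := fun x => ‖ψ x‖^2/‖x‖)
      · intro n
        apply Continuous.aestronglyMeasurable
        exact (hψ.continuous.norm.pow 2).div
          (Real.continuous_sqrt.comp ((continuous_norm.pow 2).add continuous_const))
          (fun x => ne_of_gt (Real.sqrt_pos.mpr (by positivity)))
      · exact hInt
      · intro n
        filter_upwards [hae] with x hx
        have hx0 : 0 < ‖x‖ := norm_pos_iff.mpr hx
        have hs : ‖x‖ ≤ Real.sqrt (‖x‖^2 + ((1:ℝ)/(n+1))^2) := by
          have h := Real.sqrt_le_sqrt (show ‖x‖^2 ≤ ‖x‖^2 + ((1:ℝ)/(n+1))^2 from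
            le_add_of_nonneg_right (by positivity))
          rwa [Real.sqrt_sq (norm_nonneg x)] at h
        rw [Real.norm_eq_abs, abs_of_nonneg (by positivity)]
        exact div_le_div_of_nonneg_left (by positivity) hx0 hs
      · filter_upwards [hae] with x hx
        have hx0 : 0 < ‖x‖ := norm_pos_iff.mpr hx
        have h1 : Tendsto (fun n : ℕ => ((1:ℝ)/(n+1))) atTop (𝓝 0) :=
          tendsto_one_div_add_atTop_nhds_zero_nat
        have h2 : Tendsto (fun t : ℝ => ‖ψ x‖^2 / Real.sqrt (‖x‖^2 + t^2)) (𝓝 0)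
            (𝓝 (‖ψ x‖^2/‖x‖)) := by
          have hcont0 : Tendsto (fun t : ℝ => Real.sqrt (‖x‖^2 + t^2)) (𝓝 0)
              (𝓝 (Real.sqrt (‖x‖^2 + (0:ℝ)^2))) :=
            (Real.continuous_sqrt.comp (continuous_const.add (continuous_pow 2))).tendsto 0
          have hval : Real.sqrt (‖x‖^2 + (0:ℝ)^2) = ‖x‖ := by
            simp [Real.sqrt_sq (norm_nonneg x)]
          rw [hval] at hcont0
          exact tendsto_const_nhds.div hcont0 (ne_of_gt hx0)
        exact h2.comp h1
    have hmain : (∫ x : EE, ‖ψ x‖^2/‖x‖)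
        ≤ 4*R* ∫ x : EE, ∑ i, ‖fderiv ℝ ψ x (EuclideanSpace.single i 1)‖ ^ 2 :=
      le_of_tendsto hTend (Eventually.of_forall hbd)
    calc (1/(4*R)) * ∫ x : EE, ‖ψ x‖^2/‖x‖
        ≤ (1/(4*R)) * (4*R* ∫ x : EE, ∑ i, ‖fderiv ℝ ψ x (EuclideanSpace.single i 1)‖ ^ 2) :=
          mul_le_mul_of_nonneg_left hmain (by positivity)
      _ = ∫ x : EE, ∑ i, ‖fderiv ℝ ψ x (EuclideanSpace.single i 1)‖ ^ 2 := by
          field_simp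
end

section
/- Let α : [0,2π) → ℝ be bounded measurable with mean value ᾱ = (1/(2π))∫₀^{2π} α(θ) dθ, and set β = dist(ᾱ, ℤ). Then for every smooth 2π-periodic complex-valued function g on ℝ, ∫₀^{2π} |g'(θ) + i α(θ) g(θ)|² dθ ≥ β² ∫₀^{2π} |g(θ)|² dθ. -/
open MeasureTheory intervalIntegral Set AddCircle
open scoped ENNReal

local notation "T2P" => 2 * Real.pi

lemma two_pi_pos' : (0:ℝ) < 2 * Real.pi := by positivity

instance factpi : Fact ((0:ℝ) < 2 * Real.pi) := ⟨two_pi_pos'⟩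

lemma measurable_liftIoc' (f : ℝ → ℂ) (hf : Measurable f) :
    Measurable (AddCircle.liftIoc T2P 0 f) := by
  have : AddCircle.liftIoc T2P 0 f
      = (f ∘ (Subtype.val : Set.Ioc (0:ℝ) (0 + T2P) → ℝ)) ∘ (AddCircle.measurableEquivIoc T2P 0) := rfl
  rw [this]
  exact (hf.comp measurable_subtype_coe).comp (AddCircle.measurableEquivIoc T2P 0).measurable

lemma parseval_on (f : ℝ → ℂ) (hf : Measurable f) (M : ℝ) (hM : ∀ x ∈ Set.Ioc (0:ℝ) (2*Real.pi), ‖f x‖ ≤ M) :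
    Summable (fun n : ℤ => ‖fourierCoeffOn two_pi_pos' f n‖^2) ∧
    ∑' n : ℤ, ‖fourierCoeffOn two_pi_pos' f n‖^2
      = (1/(2*Real.pi)) * ∫ θ in (0:ℝ)..(2*Real.pi), ‖f θ‖^2 := by
  set F : AddCircle T2P → ℂ := AddCircle.liftIoc T2P 0 f with hF
  have hFm : AEStronglyMeasurable F haarAddCircle :=
    (measurable_liftIoc' f hf).aestronglyMeasurable
  have hFb : ∀ z, ‖F z‖ ≤ M := fun z => by
    refine hM ((AddCircle.equivIoc T2P 0 z : Set.Ioc (0:ℝ) (0 + T2P)) : ℝ) ?_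
    have := (AddCircle.equivIoc T2P 0 z).2
    simpa using this
  have hmem : MemLp F 2 haarAddCircle :=
    MemLp.of_bound hFm M (Filter.Eventually.of_forall hFb)
  set fL : Lp ℂ 2 (@haarAddCircle T2P factpi) := hmem.toLp F with hfL
  have hae : (fL : AddCircle T2P → ℂ) =ᵐ[haarAddCircle] F := hmem.coeFn_toLp
  have hcoeff : ∀ n : ℤ, fourierCoeff (fL : AddCircle T2P → ℂ) n = fourierCoeffOn two_pi_pos' f n := by
    intro n
    have h1 : fourierCoeff (fL : AddCircle T2P → ℂ) n = fourierCoeff F n := by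
      unfold fourierCoeff
      apply MeasureTheory.integral_congr_ae
      filter_upwards [hae] with z hz
      rw [hz]
    have h2 := fourierCoeff_liftIoc_eq (T := T2P) (a := 0) f n
    simp only [zero_add] at h2
    exact h1.trans h2
  constructor
  · have hs : Summable (fun n : ℤ => ‖fourierBasis.repr fL n‖ ^ ((2:ℝ≥0∞).toReal)) :=
      (lp.memℓp (fourierBasis.repr fL)).summable (by norm_num)
    have hs2 : Summable (fun n : ℤ => ‖fourierBasis.repr fL n‖ ^ (2:ℕ)) := by
      convert hs using 2 with n
      rw [← Real.rpow_natCast]; norm_num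
    refine hs2.congr fun n => ?_
    rw [fourierBasis_repr, hcoeff]
  · have key := tsum_sq_fourierCoeff fL
    have h2 : ∑' n : ℤ, ‖fourierCoeffOn two_pi_pos' f n‖^2
        = ∫ t : AddCircle T2P, ‖fL t‖ ^ 2 ∂haarAddCircle := by
      rw [← key]
      congr 1; funext n; rw [hcoeff]
    rw [h2]
    have h3 : ∫ t : AddCircle T2P, ‖fL t‖ ^ 2 ∂haarAddCircle
        = ∫ t : AddCircle T2P, ‖F t‖ ^ 2 ∂haarAddCircle := by
      apply MeasureTheory.integral_congr_ae
      filter_upwards [hae] with z hz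
      rw [hz]
    rw [h3]
    have h4 : ∫ θ in (0:ℝ)..(0 + T2P), ‖F (θ : AddCircle T2P)‖^2
        = ∫ t : AddCircle T2P, ‖F t‖ ^ 2 ∂(volume) :=
      AddCircle.intervalIntegral_preimage T2P 0 (fun z => ‖F z‖^2)
    rw [volume_eq_smul_haarAddCircle, MeasureTheory.integral_smul_measure,
      ENNReal.toReal_ofReal two_pi_pos'.le] at h4
    have h5 : ∫ θ in (0:ℝ)..(2*Real.pi), ‖f θ‖^2
        = ∫ θ in (0:ℝ)..(0 + T2P), ‖F (θ : AddCircle T2P)‖^2 := by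
      rw [zero_add, intervalIntegral.integral_of_le two_pi_pos'.le,
        intervalIntegral.integral_of_le two_pi_pos'.le]
      apply setIntegral_congr_fun measurableSet_Ioc
      intro x hx
      show ‖f x‖^2 = ‖AddCircle.liftIoc T2P 0 f (x : AddCircle T2P)‖^2
      rw [AddCircle.liftIoc_coe_apply]
      rwa [zero_add]
    rw [h5, h4, smul_eq_mul]
    field_simp

lemma coeff_deriv (G G' : ℝ → ℂ) (hG : ∀ x, HasDerivAt G (G' x) x)
    (hG'c : Continuous G') (hpG : G (2*Real.pi) = G 0) (n : ℤ) :
    fourierCoeffOn two_pi_pos' G' n = Complex.I * n * fourierCoeffOn two_pi_pos' G n := by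
  rcases eq_or_ne n 0 with rfl | hn
  · rw [fourierCoeffOn_eq_integral]
    have h1 : ∀ x:ℝ, (@fourier (2*Real.pi - 0) (-0)) (x : AddCircle (2*Real.pi - 0)) • G' x = G' x := by
      intro x; simp [fourier_zero]
    simp only [h1]
    rw [intervalIntegral.integral_eq_sub_of_hasDerivAt (fun x _ => hG x)
      (hG'c.intervalIntegrable _ _), hpG]
    simp
  · have h := fourierCoeffOn_of_hasDerivAt two_pi_pos' hn
      (fun x _ => hG x) (hG'c.intervalIntegrable _ _)
    rw [hpG, sub_self, mul_zero, zero_sub] at h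
    have hn' : (n:ℂ) ≠ 0 := Int.cast_ne_zero.mpr hn
    have hπ : (Real.pi : ℂ) ≠ 0 := Complex.ofReal_ne_zero.mpr Real.pi_ne_zero
    rw [h]
    push_cast
    field_simp [Complex.I_ne_zero]
    ring

lemma coeff_add_smul (δ : ℝ) (G G' : ℝ → ℂ) (hGc : Continuous G) (hG'c : Continuous G') (n : ℤ) :
    fourierCoeffOn two_pi_pos' (fun θ => G' θ + Complex.I*δ*G θ) n
      = fourierCoeffOn two_pi_pos' G' n + Complex.I*δ*fourierCoeffOn two_pi_pos' G n := by
  have hfc : Continuous fun x : ℝ => (@fourier (2*Real.pi - 0) (-n)) (x : AddCircle (2*Real.pi - 0)) :=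
    (map_continuous (fourier (-n))).comp (AddCircle.continuous_mk' _)
  have e : ∀ x:ℝ, (@fourier (2*Real.pi - 0) (-n)) (x : AddCircle (2*Real.pi - 0)) • (G' x + Complex.I*δ*G x)
      = (@fourier (2*Real.pi - 0) (-n)) (x : AddCircle (2*Real.pi - 0)) • G' x
        + (Complex.I*δ) * ((@fourier (2*Real.pi - 0) (-n)) (x : AddCircle (2*Real.pi - 0)) • G x) := by
    intro x; simp only [smul_eq_mul]; ring
  rw [fourierCoeffOn_eq_integral, fourierCoeffOn_eq_integral, fourierCoeffOn_eq_integral]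
  simp only [e]
  rw [intervalIntegral.integral_add (f := fun x => (@fourier (2*Real.pi - 0) (-n)) (x : AddCircle (2*Real.pi - 0)) • G' x)
    (g := fun x => (Complex.I*δ) * ((@fourier (2*Real.pi - 0) (-n)) (x : AddCircle (2*Real.pi - 0)) • G x)) ((hfc.smul hG'c).intervalIntegrable _ _)
    ((continuous_const.mul (hfc.smul hGc)).intervalIntegrable _ _),
    intervalIntegral.integral_const_mul, smul_add]
  congr 1
  rw [Complex.real_smul, Complex.real_smul]
  ring

lemma key_ineq (δ : ℝ) (G G' : ℝ → ℂ) (hG : ∀ x, HasDerivAt G (G' x) x)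
    (hG'c : Continuous G') (hpG : G (2*Real.pi) = G 0) :
    (⨅ n : ℤ, |δ - n|)^2 * ∫ θ in (0:ℝ)..(2*Real.pi), ‖G θ‖^2
      ≤ ∫ θ in (0:ℝ)..(2*Real.pi), ‖G' θ + Complex.I*δ*G θ‖^2 := by
  have hGc : Continuous G := by
    have : Differentiable ℝ G := fun x => (hG x).differentiableAt
    exact this.continuous
  set β := ⨅ n : ℤ, |δ - (n:ℝ)| with hβdef
  have hβ0 : 0 ≤ β := le_ciInf fun n => abs_nonneg _
  have hβbdd : BddBelow (Set.range fun n : ℤ => |δ - (n:ℝ)|) :=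
    ⟨0, by rintro x ⟨n, rfl⟩; exact abs_nonneg _⟩
  set H := fun θ => G' θ + Complex.I*δ*G θ with hHdef
  have hHc : Continuous H := hG'c.add ((continuous_const.mul hGc))
  obtain ⟨M1, hM1⟩ := (isCompact_Icc (a := (0:ℝ)) (b := 2*Real.pi)).exists_bound_of_continuousOn
    hGc.continuousOn
  obtain ⟨M2, hM2⟩ := (isCompact_Icc (a := (0:ℝ)) (b := 2*Real.pi)).exists_bound_of_continuousOn
    hHc.continuousOn
  obtain ⟨SG, PG⟩ := parseval_on G hGc.measurable M1
    (fun x hx => hM1 x (Set.Ioc_subset_Icc_self hx))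
  obtain ⟨SH, PH⟩ := parseval_on H hHc.measurable M2
    (fun x hx => hM2 x (Set.Ioc_subset_Icc_self hx))
  set c := fun n : ℤ => fourierCoeffOn two_pi_pos' G n with hc
  set d := fun n : ℤ => fourierCoeffOn two_pi_pos' H n with hd
  have hdn : ∀ n : ℤ, d n = Complex.I * ((((n:ℝ) + δ):ℝ):ℂ) * c n := by
    intro n
    show fourierCoeffOn two_pi_pos' (fun θ => G' θ + Complex.I*(δ:ℂ)*G θ) n = _
    rw [coeff_add_smul δ G G' hGc hG'c n, coeff_deriv G G' hG hG'c hpG n]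
    push_cast
    ring
  have hpt : ∀ n : ℤ, β^2 * ‖c n‖^2 ≤ ‖d n‖^2 := by
    intro n
    have h1 : β ≤ |(n:ℝ) + δ| := by
      have h := ciInf_le hβbdd (-n)
      have e : |δ - ((-n : ℤ):ℝ)| = |(n:ℝ) + δ| := by
        push_cast
        rw [sub_neg_eq_add, add_comm]
      rw [e] at h
      exact h
    have h2 : ‖d n‖^2 = |(n:ℝ) + δ|^2 * ‖c n‖^2 := by
      rw [hdn n, norm_mul, norm_mul, Complex.norm_I, one_mul, Complex.norm_real,
        Real.norm_eq_abs, mul_pow]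
    rw [h2]
    exact mul_le_mul_of_nonneg_right (pow_le_pow_left₀ hβ0 h1 2) (by positivity)
  have hsum : ∑' n : ℤ, β^2 * ‖c n‖^2 ≤ ∑' n : ℤ, ‖d n‖^2 :=
    Summable.tsum_le_tsum hpt (SG.mul_left _) SH
  rw [tsum_mul_left] at hsum
  have EG : ∫ θ in (0:ℝ)..(2*Real.pi), ‖G θ‖^2 = 2*Real.pi * ∑' n : ℤ, ‖c n‖^2 := by
    rw [PG]; field_simp
  have EH : ∫ θ in (0:ℝ)..(2*Real.pi), ‖H θ‖^2 = 2*Real.pi * ∑' n : ℤ, ‖d n‖^2 := by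
    rw [PH]; field_simp
  calc β^2 * ∫ θ in (0:ℝ)..(2*Real.pi), ‖G θ‖^2
      = 2*Real.pi * (β^2 * ∑' n : ℤ, ‖c n‖^2) := by rw [EG]; ring
    _ ≤ 2*Real.pi * ∑' n : ℤ, ‖d n‖^2 :=
        mul_le_mul_of_nonneg_left hsum (by positivity)
    _ = ∫ θ in (0:ℝ)..(2*Real.pi), ‖H θ‖^2 := EH.symm

lemma main_cont (α : ℝ → ℝ) (hc : Continuous α) (αbar : ℝ)
    (hαbar : αbar = (1 / (2 * Real.pi)) * ∫ θ in (0:ℝ)..(2 * Real.pi), α θ)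
    (g : ℝ → ℂ) (hg : ContDiff ℝ (⊤ : ℕ∞) g) (hper : ∀ θ, g (θ + 2 * Real.pi) = g θ) :
    (⨅ n : ℤ, |αbar - (n:ℝ)|)^2 * ∫ θ in (0:ℝ)..(2*Real.pi), ‖g θ‖^2
      ≤ ∫ θ in (0:ℝ)..(2*Real.pi), ‖deriv g θ + Complex.I * (α θ) * g θ‖^2 := by
  set A : ℝ → ℝ := fun θ => ∫ t in (0:ℝ)..θ, α t with hA
  have hAd : ∀ θ, HasDerivAt A (α θ) θ := fun θ =>
    intervalIntegral.integral_hasDerivAt_right (hc.intervalIntegrable _ _)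
      (hc.stronglyMeasurableAtFilter _ _) hc.continuousAt
  set w : ℝ → ℝ := fun θ => A θ - αbar * θ with hw
  have hwd : ∀ θ, HasDerivAt w (α θ - αbar) θ := fun θ =>
    (hAd θ).sub ((hasDerivAt_id θ).const_mul αbar |>.congr_deriv (mul_one αbar))
  set u : ℝ → ℂ := fun θ => Complex.exp ((w θ : ℂ) * Complex.I) with hu
  have hud : ∀ θ, HasDerivAt u (((α θ - αbar : ℝ) : ℂ) * Complex.I * u θ) θ := by
    intro θ
    have h1 : HasDerivAt (fun θ => ((w θ : ℝ) : ℂ) * Complex.I)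
        (((α θ - αbar : ℝ) : ℂ) * Complex.I) θ := (hwd θ).ofReal_comp.mul_const Complex.I
    have h2 := h1.cexp
    convert h2 using 1
    simp only [hu]
    ring
  have hu1 : ∀ θ, ‖u θ‖ = 1 := fun θ => Complex.norm_exp_ofReal_mul_I (w θ)
  have hgd : ∀ θ, HasDerivAt g (deriv g θ) θ := fun θ =>
    ((hg.differentiable (by simp)) θ).hasDerivAt
  set G : ℝ → ℂ := fun θ => g θ * u θ with hG
  set G' : ℝ → ℂ := fun θ => (deriv g θ + Complex.I * ((α θ - αbar : ℝ) : ℂ) * g θ) * u θ with hG'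
  have hGd : ∀ θ, HasDerivAt G (G' θ) θ := by
    intro θ
    have := (hgd θ).mul (hud θ)
    refine this.congr_deriv ?_
    simp only [hG']
    ring
  have hAc : Continuous A :=
    continuous_iff_continuousAt.mpr fun θ => (hAd θ).differentiableAt.continuousAt
  have huc : Continuous u :=
    Complex.continuous_exp.comp (((Complex.continuous_ofReal.comp
      (hAc.sub (continuous_const.mul continuous_id))).mul continuous_const))
  have hgc : Continuous g := hg.continuous
  have hg'c : Continuous (deriv g) := hg.continuous_deriv (by simp)
  have hG'c : Continuous G' :=
    ((hg'c.add ((continuous_const.mul (Complex.continuous_ofReal.comp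
      (hc.sub continuous_const))).mul hgc))).mul huc
  -- periodicity of G
  have hA2π : A (2*Real.pi) = 2*Real.pi * αbar := by
    rw [hαbar]
    have : Real.pi ≠ 0 := Real.pi_ne_zero
    field_simp
    rfl
  have hpG : G (2*Real.pi) = G 0 := by
    have hg2 : g (2*Real.pi) = g 0 := by
      have := hper 0
      rwa [zero_add] at this
    have hw2 : w (2*Real.pi) = 0 := by
      simp only [hw, hA2π]; ring
    have hw0 : w 0 = 0 := by
      simp only [hw, hA]
      rw [intervalIntegral.integral_same]
      ring
    simp only [hG, hu, hw2, hw0, hg2]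
  have key := key_ineq αbar G G' hGd hG'c hpG
  -- rewrite the two integrals
  have e1 : ∀ θ : ℝ, ‖G' θ + Complex.I*(αbar:ℂ)*G θ‖^2
      = ‖deriv g θ + Complex.I * (α θ) * g θ‖^2 := by
    intro θ
    have : G' θ + Complex.I*(αbar:ℂ)*G θ = (deriv g θ + Complex.I * (α θ) * g θ) * u θ := by
      simp only [hG', hG]
      push_cast
      ring
    rw [this, norm_mul, hu1 θ, mul_one]
  have e2 : ∀ θ : ℝ, ‖G θ‖^2 = ‖g θ‖^2 := by
    intro θ
    simp only [hG]
    rw [norm_mul, hu1 θ, mul_one]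
  simp only [e1, e2] at key
  exact key

lemma betafun_bddBelow (a : ℝ) : BddBelow (Set.range fun n : ℤ => |a - (n:ℝ)|) :=
  ⟨0, by rintro x ⟨n, rfl⟩; exact abs_nonneg _⟩

lemma betafun_aux (a b : ℝ) : (⨅ n : ℤ, |a - (n:ℝ)|) ≤ (⨅ n : ℤ, |b - (n:ℝ)|) + |a - b| := by
  rw [← sub_le_iff_le_add]
  refine le_ciInf fun n => ?_
  rw [sub_le_iff_le_add]
  calc (⨅ m : ℤ, |a - (m:ℝ)|) ≤ |a - (n:ℝ)| := ciInf_le (betafun_bddBelow a) n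
    _ ≤ |a - b| + |b - (n:ℝ)| := abs_sub_le a b n
    _ = |b - (n:ℝ)| + |a - b| := add_comm _ _

lemma betafun_lip (a b : ℝ) :
    abs ((⨅ n : ℤ, |a - (n:ℝ)|) - ⨅ n : ℤ, |b - (n:ℝ)|) ≤ |a - b| := by
  rw [abs_sub_le_iff]
  constructor
  · rw [sub_le_iff_le_add, add_comm]
    exact betafun_aux a b
  · rw [sub_le_iff_le_add, add_comm, abs_sub_comm a b]
    exact betafun_aux b a

lemma mollify (α : ℝ → ℝ) (hmeas : Measurable α) (C : ℝ) (hbd : ∀ θ, |α θ| ≤ C) :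
    ∃ αs : ℕ → ℝ → ℝ,
      (∀ k, Continuous (αs k)) ∧
      (∀ k θ, |αs k θ| ≤ C) ∧
      (∀ᵐ x : ℝ, Filter.Tendsto (fun k => αs k x) Filter.atTop (nhds (α x))) := by
  have hC0 : 0 ≤ C := (abs_nonneg (α 0)).trans (hbd 0)
  set r : ℕ → ℝ := fun k => 1/((k:ℝ)+1) with hr
  have hrpos : ∀ k, 0 < r k := fun k => by positivity
  have hint : ∀ a b : ℝ, IntervalIntegrable α volume a b := by
    intro a b
    rw [intervalIntegrable_iff]
    refine MeasureTheory.Integrable.mono' (g := fun _ => C)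
      (integrableOn_const measure_Ioc_lt_top.ne)
      hmeas.aestronglyMeasurable (Filter.Eventually.of_forall fun x => by simpa using hbd x)
  set αs : ℕ → ℝ → ℝ := fun k x => (2 * r k)⁻¹ * ∫ t in (x - r k)..(x + r k), α t with hαs
  refine ⟨αs, ?_, ?_, ?_⟩
  · intro k
    have hA : Continuous (fun y => ∫ t in (0:ℝ)..y, α t) :=
      intervalIntegral.continuous_primitive hint 0
    have e : αs k = fun x => (2 * r k)⁻¹ * ((∫ t in (0:ℝ)..(x + r k), α t)
        - ∫ t in (0:ℝ)..(x - r k), α t) :=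
      funext fun x => congrArg (fun z => (2 * r k)⁻¹ * z)
        (intervalIntegral.integral_interval_sub_left (hint 0 (x + r k)) (hint 0 (x - r k))).symm
    rw [e]
    exact continuous_const.mul ((hA.comp (continuous_id.add continuous_const)).sub
      (hA.comp (continuous_id.sub continuous_const)))
  · intro k x
    have h1 : ‖∫ t in (x - r k)..(x + r k), α t‖ ≤ C * |(x + r k) - (x - r k)| :=
      intervalIntegral.norm_integral_le_of_norm_le_const fun t _ => by simpa using hbd t
    have h2 : |(x + r k) - (x - r k)| = 2 * r k := by
      rw [abs_of_pos (by linarith [hrpos k])]; ring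
    rw [hαs]
    simp only
    rw [abs_mul, abs_inv, abs_of_pos (by linarith [hrpos k] : (0:ℝ) < 2 * r k)]
    rw [h2] at h1
    calc (2 * r k)⁻¹ * |∫ t in (x - r k)..(x + r k), α t|
        ≤ (2 * r k)⁻¹ * (C * (2 * r k)) := by
          exact mul_le_mul_of_nonneg_left (by simpa using h1) (by positivity)
      _ = C := by field_simp [(hrpos k).ne']
  · have hloc : MeasureTheory.LocallyIntegrable α volume := by
      intro x
      refine ⟨Metric.closedBall x 1, Metric.closedBall_mem_nhds x one_pos, ?_⟩
      refine MeasureTheory.Integrable.mono' (g := fun _ => C)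
        (integrableOn_const (lt_top_iff_ne_top.1 ?_))
        hmeas.aestronglyMeasurable (Filter.Eventually.of_forall fun y => by simpa using hbd y)
      exact lt_of_le_of_lt (measure_mono (Metric.closedBall_subset_ball one_lt_two))
        measure_ball_lt_top
    have h := IsUnifLocDoublingMeasure.ae_tendsto_average (μ := (volume : Measure ℝ)) hloc 1
    filter_upwards [h] with x hx
    have hδ : Filter.Tendsto r Filter.atTop (nhdsWithin 0 (Set.Ioi 0)) := by
      rw [tendsto_nhdsWithin_iff]
      exact ⟨tendsto_one_div_add_atTop_nhds_zero_nat,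
        Filter.Eventually.of_forall fun k => hrpos k⟩
    have hev : ∀ᶠ j in Filter.atTop, x ∈ Metric.closedBall ((fun _ : ℕ => x) j) (1 * r j) :=
      Filter.Eventually.of_forall fun j => Metric.mem_closedBall_self (by positivity)
    have hx2 := hx (fun _ : ℕ => x) r hδ hev
    have heq : ∀ j : ℕ, (⨍ y in Metric.closedBall x (r j), α y) = αs j x := by
      intro j
      rw [MeasureTheory.setAverage_eq, Real.volume_real_closedBall (by linarith [hrpos j]), Real.closedBall_eq_Icc,
        MeasureTheory.integral_Icc_eq_integral_Ioc,
        ← intervalIntegral.integral_of_le (by linarith [hrpos j])]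
      simp [hαs, smul_eq_mul]
    refine Filter.Tendsto.congr (fun j => heq j) hx2

/-- The lowest eigenvalue of `(-i d/dθ + α(θ))²` with periodic boundary conditions
on `(0,2π)` is at least `β² = dist(ᾱ,ℤ)²`, where `ᾱ` is the mean of `α`. -/
theorem stmt_4 (α : ℝ → ℝ) (hmeas : Measurable α)
    (C : ℝ) (hbd : ∀ θ, |α θ| ≤ C)
    (αbar β : ℝ)
    (hαbar : αbar = (1 / (2 * Real.pi)) * ∫ θ in (0:ℝ)..(2 * Real.pi), α θ)
    (hβ : β = ⨅ n : ℤ, |αbar - (n : ℝ)|)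
    (g : ℝ → ℂ) (hg : ContDiff ℝ (⊤ : ℕ∞) g)
    (hper : ∀ θ, g (θ + 2 * Real.pi) = g θ) :
    (∫ θ in (0:ℝ)..(2 * Real.pi), ‖deriv g θ + Complex.I * (α θ) * g θ‖ ^ 2) ≥
      β ^ 2 * ∫ θ in (0:ℝ)..(2 * Real.pi), ‖g θ‖ ^ 2 := by
  obtain ⟨αs, hcont, hbds, hae⟩ := mollify α hmeas C hbd
  have hC0 : 0 ≤ C := (abs_nonneg (α 0)).trans (hbd 0)
  set abarK : ℕ → ℝ := fun k => (1/(2*Real.pi)) * ∫ θ in (0:ℝ)..(2*Real.pi), αs k θ with habarK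
  set βK : ℕ → ℝ := fun k => ⨅ n : ℤ, |abarK k - (n:ℝ)| with hβK
  have haer := MeasureTheory.ae_restrict_of_ae
    (μ := (volume : Measure ℝ)) (s := Set.Ioc (0:ℝ) (2*Real.pi)) hae
  -- step 1 : convergence of the means
  have hmean : Filter.Tendsto abarK Filter.atTop (nhds αbar) := by
    have h1 : Filter.Tendsto (fun k => ∫ θ in Set.Ioc (0:ℝ) (2*Real.pi), αs k θ)
        Filter.atTop (nhds (∫ θ in Set.Ioc (0:ℝ) (2*Real.pi), α θ)) := by
      refine MeasureTheory.tendsto_integral_of_dominated_convergence (fun _ => C)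
        (fun k => (hcont k).aestronglyMeasurable) ?_ ?_ haer
      · exact integrableOn_const measure_Ioc_lt_top.ne
      · exact fun k => Filter.Eventually.of_forall fun x => by simpa using hbds k x
    have e : ∀ k, abarK k = (1/(2*Real.pi)) * ∫ θ in Set.Ioc (0:ℝ) (2*Real.pi), αs k θ := by
      intro k
      rw [habarK]
      simp only
      rw [intervalIntegral.integral_of_le two_pi_pos'.le]
    have e2 : αbar = (1/(2*Real.pi)) * ∫ θ in Set.Ioc (0:ℝ) (2*Real.pi), α θ := by
      rw [hαbar, intervalIntegral.integral_of_le two_pi_pos'.le]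
    rw [e2]
    exact Filter.Tendsto.congr (fun k => (e k).symm) (h1.const_mul _)
  -- step 2 : convergence of β's
  have hβconv : Filter.Tendsto βK Filter.atTop (nhds β) := by
    have h0 : Filter.Tendsto (fun k => |abarK k - αbar|) Filter.atTop (nhds 0) := by
      simpa [Real.dist_eq] using tendsto_iff_dist_tendsto_zero.mp hmean
    rw [tendsto_iff_dist_tendsto_zero]
    refine squeeze_zero (fun k => dist_nonneg) (fun k => ?_) h0
    rw [Real.dist_eq, hβ]
    exact betafun_lip (abarK k) αbar
  -- step 3 : convergence of energies
  have hg'c : Continuous (deriv g) := hg.continuous_deriv (by simp)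
  have hgc : Continuous g := hg.continuous
  have hLHS : Filter.Tendsto
      (fun k => ∫ θ in Set.Ioc (0:ℝ) (2*Real.pi), ‖deriv g θ + Complex.I * (αs k θ) * g θ‖ ^ 2)
      Filter.atTop
      (nhds (∫ θ in Set.Ioc (0:ℝ) (2*Real.pi), ‖deriv g θ + Complex.I * (α θ) * g θ‖ ^ 2)) := by
    refine MeasureTheory.tendsto_integral_of_dominated_convergence
      (fun θ => (‖deriv g θ‖ + C * ‖g θ‖)^2)
      (fun k => ((hg'c.add ((continuous_const.mul ((Complex.continuous_ofReal.comp
        (hcont k)))).mul hgc)).norm.pow 2).aestronglyMeasurable)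
      ?_ ?_ ?_
    · exact (((hg'c.norm.add (continuous_const.mul hgc.norm)).pow 2)).integrableOn_Ioc
    · intro k
      refine Filter.Eventually.of_forall fun θ => ?_
      have h1 : ‖deriv g θ + Complex.I * (αs k θ) * g θ‖ ≤ ‖deriv g θ‖ + C * ‖g θ‖ := by
        refine (norm_add_le _ _).trans ?_
        gcongr
        rw [norm_mul, norm_mul, Complex.norm_I, one_mul, Complex.norm_real, Real.norm_eq_abs]
        exact mul_le_mul_of_nonneg_right (hbds k θ) (norm_nonneg _)
      have h2 : (0:ℝ) ≤ ‖deriv g θ + Complex.I * (αs k θ) * g θ‖ := norm_nonneg _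
      rw [Real.norm_eq_abs, abs_of_nonneg (by positivity)]
      exact pow_le_pow_left₀ h2 h1 2
    · filter_upwards [haer] with θ hθ
      have hcontv : Continuous fun v : ℝ => ‖deriv g θ + Complex.I * (v:ℂ) * g θ‖ ^ 2 := by
        apply Continuous.pow
        apply Continuous.norm
        exact continuous_const.add
          ((continuous_const.mul Complex.continuous_ofReal).mul continuous_const)
      exact (hcontv.continuousAt.tendsto.comp hθ)
  have hfin : ∫ θ in (0:ℝ)..(2 * Real.pi), ‖deriv g θ + Complex.I * (α θ) * g θ‖ ^ 2
      = ∫ θ in Set.Ioc (0:ℝ) (2*Real.pi), ‖deriv g θ + Complex.I * (α θ) * g θ‖ ^ 2 :=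
    intervalIntegral.integral_of_le two_pi_pos'.le
  have hLHS' : Filter.Tendsto
      (fun k => ∫ θ in (0:ℝ)..(2*Real.pi), ‖deriv g θ + Complex.I * (αs k θ) * g θ‖ ^ 2)
      Filter.atTop
      (nhds (∫ θ in (0:ℝ)..(2*Real.pi), ‖deriv g θ + Complex.I * (α θ) * g θ‖ ^ 2)) := by
    rw [hfin]
    exact hLHS.congr fun k => (intervalIntegral.integral_of_le two_pi_pos'.le).symm
  rw [ge_iff_le]
  have hineq : ∀ k, βK k ^ 2 * ∫ θ in (0:ℝ)..(2*Real.pi), ‖g θ‖^2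
      ≤ ∫ θ in (0:ℝ)..(2*Real.pi), ‖deriv g θ + Complex.I * (αs k θ) * g θ‖ ^ 2 :=
    fun k => main_cont (αs k) (hcont k) (abarK k) rfl g hg hper
  exact le_of_tendsto_of_tendsto'
    (((hβconv.pow 2).mul_const (∫ θ in (0:ℝ)..(2*Real.pi), ‖g θ‖^2))) hLHS' hineq
end

section
/- Let ε > 0 and R₂ > 0, R₁ = R₂/2. For every ψ ∈ C_c^∞(ℝ²) one has ∫_{ℝ²} |ψ(x)|²/|x| dx ≤ 16 R₂ ∫ |∇ψ|² + (16 R₂/(R₂−R₁)² + 2/R₁) ∫ |ψ|², i.e. ∫ |ψ|²/|x| dx ≤ 16 R₂ ∫|∇ψ|² + (68/R₂) ∫|ψ|². -/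
open MeasureTheory Real Set ENNReal NNReal

lemma opnorm_sq_le (A : EuclideanSpace ℝ (Fin 2) →L[ℝ] ℂ) :
    ‖A‖ ^ 2 ≤ ∑ i, ‖A (EuclideanSpace.single i 1)‖ ^ 2 := by
  have hS : (0:ℝ) ≤ ∑ i, ‖A (EuclideanSpace.single i 1)‖ ^ 2 :=
    Finset.sum_nonneg fun i _ => sq_nonneg _
  have hA : ‖A‖ ≤ Real.sqrt (∑ i, ‖A (EuclideanSpace.single i 1)‖ ^ 2) := by
    apply ContinuousLinearMap.opNorm_le_bound _ (Real.sqrt_nonneg _)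
    intro v
    have hv : v = ∑ i, v i • EuclideanSpace.single i (1:ℝ) := by
      ext j
      rw [Fin.sum_univ_two]
      fin_cases j <;> simp [EuclideanSpace.single_apply]
    have key : ∑ i, |v i| * ‖A (EuclideanSpace.single i 1)‖ ≤
        Real.sqrt (∑ i, (v i)^2) * Real.sqrt (∑ i, ‖A (EuclideanSpace.single i 1)‖ ^ 2) := by
      have h2 := Finset.sum_mul_sq_le_sq_mul_sq Finset.univ (fun i => |v i|)
        (fun i => ‖A (EuclideanSpace.single i 1)‖)
      have hnn : (0:ℝ) ≤ ∑ i, |v i| * ‖A (EuclideanSpace.single i 1)‖ :=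
        Finset.sum_nonneg fun i _ => mul_nonneg (abs_nonneg _) (norm_nonneg _)
      rw [← Real.sqrt_mul_self hnn, ← Real.sqrt_mul (Finset.sum_nonneg fun i _ => sq_nonneg _)]
      apply Real.sqrt_le_sqrt
      simpa [sq_abs, sq] using h2
    calc ‖A v‖ = ‖∑ i, v i • A (EuclideanSpace.single i 1)‖ := by
          conv_lhs => rw [hv]
          rw [map_sum]; simp
      _ ≤ ∑ i, |v i| * ‖A (EuclideanSpace.single i 1)‖ := by
          refine (norm_sum_le _ _).trans_eq ?_
          simp [norm_smul]
      _ ≤ Real.sqrt (∑ i, (v i)^2) * Real.sqrt (∑ i, ‖A (EuclideanSpace.single i 1)‖ ^ 2) := key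
      _ = Real.sqrt (∑ i, ‖A (EuclideanSpace.single i 1)‖ ^ 2) * ‖v‖ := by
          rw [EuclideanSpace.norm_eq, mul_comm]
          congr 2
          exact Finset.sum_congr rfl fun i _ => by rw [Real.norm_eq_abs, sq_abs]
  calc ‖A‖^2 ≤ Real.sqrt (∑ i, ‖A (EuclideanSpace.single i 1)‖ ^ 2) ^2 :=
        pow_le_pow_left₀ (norm_nonneg _) hA 2
    _ = _ := Real.sq_sqrt hS

lemma swap_lemma (F : ℝ → ℝ≥0∞) (hF : Measurable F) :
    ∫⁻ r in Ioi (0:ℝ), ∫⁻ s in Ioi r, F s = ∫⁻ s in Ioi (0:ℝ), ENNReal.ofReal s * F s := by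
  have h1 : ∀ r : ℝ, ∫⁻ s in Ioi r, F s = ∫⁻ s, (Ioi r).indicator F s := by
    intro r; rw [lintegral_indicator measurableSet_Ioi]
  have hmeas : AEMeasurable (Function.uncurry fun r s => (Ioi r).indicator F s)
      ((volume.restrict (Ioi (0:ℝ))).prod volume) := by
    have : (Function.uncurry fun r s => (Ioi r).indicator F s)
        = {p : ℝ × ℝ | p.1 < p.2}.indicator (fun p => F p.2) := by
      funext p
      rcases p with ⟨r, s⟩
      by_cases h : r < s <;>
        simp [Function.uncurry, Set.indicator_apply, h, mem_Ioi]
    rw [this]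
    exact ((hF.comp measurable_snd).indicator (measurableSet_lt measurable_fst measurable_snd)).aemeasurable
  calc ∫⁻ r in Ioi (0:ℝ), ∫⁻ s in Ioi r, F s
      = ∫⁻ r in Ioi (0:ℝ), ∫⁻ s, (Ioi r).indicator F s := by
        simp_rw [h1]
    _ = ∫⁻ s, ∫⁻ r in Ioi (0:ℝ), (Ioi r).indicator F s := by
        exact lintegral_lintegral_swap hmeas
    _ = ∫⁻ s, F s * ENNReal.ofReal s := by
        congr 1
        funext s
        have h2 : ∀ r : ℝ, (Ioi r).indicator F s = (Iio s).indicator (fun _ => F s) r := by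
          intro r
          by_cases h : r < s <;> simp [Set.indicator_apply, h, mem_Ioi, mem_Iio]
        simp_rw [h2]
        rw [lintegral_indicator measurableSet_Iio, setLIntegral_const,
          Measure.restrict_apply measurableSet_Iio]
        have : Iio s ∩ Ioi (0:ℝ) = Ioo 0 s := by
          ext x; simp [mem_Ioo, mem_Iio, mem_Ioi, and_comm]
        rw [this, Real.volume_Ioo]
        simp
    _ = ∫⁻ s in Ioi (0:ℝ), ENNReal.ofReal s * F s := by
        have : ∀ s : ℝ, F s * ENNReal.ofReal s
            = (Ioi (0:ℝ)).indicator (fun s => ENNReal.ofReal s * F s) s := by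
          intro s
          by_cases h : 0 < s
          · simp [Set.indicator_apply, h, mem_Ioi, mul_comm]
          · simp [Set.indicator_apply, h, mem_Ioi, ENNReal.ofReal_eq_zero.2 (le_of_not_gt h)]
        simp_rw [this]
        rw [lintegral_indicator measurableSet_Ioi]

lemma oneD (u : ℝ → ℂ) (U : ℝ → ℂ) (M : ℝ)
    (hu : ∀ r, HasDerivAt u (U r) r) (hUc : Continuous U) (huc : Continuous u)
    (hM : ∀ r, M ≤ r → u r = 0) (r : ℝ) :
    ENNReal.ofReal (‖u r‖ ^ 2) ≤ ∫⁻ s in Ioi r, ENNReal.ofReal (2 * ‖u s‖ * ‖U s‖) := by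
  set N := max r M with hN
  have hrN : r ≤ N := le_max_left _ _
  have huN : u N = 0 := hM N (le_max_right _ _)
  set g' : ℝ → ℝ := fun s => 2 * (inner ℝ (u s) (U s) : ℝ) with hg'
  have hg : ∀ s, HasDerivAt (fun t => ‖u t‖ ^ 2) (g' s) s := by
    intro s
    have h1 : HasDerivAt (fun t => (inner ℝ (u t) (u t) : ℝ))
        ((inner ℝ (u s) (U s) : ℝ) + (inner ℝ (U s) (u s) : ℝ)) s :=
      (hu s).inner ℝ (hu s)
    have h2 : (fun t => (inner ℝ (u t) (u t) : ℝ)) = fun t => ‖u t‖ ^ 2 := by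
      funext t; exact real_inner_self_eq_norm_sq _
    rw [h2] at h1
    have hc : (inner ℝ (U s) (u s) : ℝ) = inner ℝ (u s) (U s) := real_inner_comm _ _
    have h3 : (inner ℝ (u s) (U s) : ℝ) + inner ℝ (U s) (u s) = g' s := by
      show (inner ℝ (u s) (U s) : ℝ) + inner ℝ (U s) (u s) = 2 * inner ℝ (u s) (U s)
      linarith
    exact h3 ▸ h1
  have hg'c : Continuous g' := by
    exact continuous_const.mul (huc.inner hUc)
  have hcont2 : Continuous fun s => 2 * ‖u s‖ * ‖U s‖ := by
    exact (continuous_const.mul huc.norm).mul hUc.norm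
  have key : ‖u r‖ ^ 2 ≤ ∫ s in Ioc r N, 2 * ‖u s‖ * ‖U s‖ := by
    have hftc : ∫ s in r..N, g' s = ‖u N‖ ^ 2 - ‖u r‖ ^ 2 :=
      intervalIntegral.integral_eq_sub_of_hasDerivAt (fun s _ => hg s)
        (hg'c.intervalIntegrable _ _)
    rw [huN] at hftc
    simp only [norm_zero, ne_eq, OfNat.ofNat_ne_zero, not_false_eq_true, zero_pow, zero_sub]
      at hftc
    have h3 : ‖u r‖ ^ 2 = -∫ s in r..N, g' s := by rw [hftc]; ring
    have h4 : -∫ s in r..N, g' s ≤ ∫ s in r..N, |g' s| := by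
      exact (neg_le_abs _).trans (intervalIntegral.abs_integral_le_integral_abs hrN)
    have h5 : ∫ s in r..N, |g' s| ≤ ∫ s in r..N, 2 * ‖u s‖ * ‖U s‖ := by
      apply intervalIntegral.integral_mono_on hrN (hg'c.abs.intervalIntegrable _ _)
        (hcont2.intervalIntegrable _ _)
      intro s _
      rw [hg', abs_mul, abs_two, mul_assoc]
      gcongr
      exact (abs_real_inner_le_norm _ _)
    rw [h3]
    refine (h4.trans h5).trans_eq ?_
    rw [intervalIntegral.integral_of_le hrN]
  calc ENNReal.ofReal (‖u r‖ ^ 2) ≤ ENNReal.ofReal (∫ s in Ioc r N, 2 * ‖u s‖ * ‖U s‖) :=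
        ENNReal.ofReal_le_ofReal key
    _ = ∫⁻ s in Ioc r N, ENNReal.ofReal (2 * ‖u s‖ * ‖U s‖) := by
        rw [ofReal_integral_eq_lintegral_ofReal]
        · exact (intervalIntegrable_iff_integrableOn_Ioc_of_le hrN).mp
            (hcont2.intervalIntegrable _ _)
        · exact Filter.Eventually.of_forall fun s =>
            mul_nonneg (mul_nonneg (by norm_num) (norm_nonneg _)) (norm_nonneg _)
    _ ≤ ∫⁻ s in Ioi r, ENNReal.ofReal (2 * ‖u s‖ * ‖U s‖) :=
        lintegral_mono_set Ioc_subset_Ioi_self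

lemma integrableOn_strip {f : ℝ × ℝ → ℝ} (hf : Continuous f) (M' : ℝ)
    (h0 : ∀ p : ℝ × ℝ, M' ≤ |p.1| → f p = 0) :
    IntegrableOn f (Ioi (0:ℝ) ×ˢ Ioo (-π) π) := by
  set T : Set (ℝ × ℝ) := Ioi (0:ℝ) ×ˢ Ioo (-π) π with hT
  set K : Set (ℝ × ℝ) := Icc (-M') M' ×ˢ Icc (-π) π with hK
  have hTm : MeasurableSet T := measurableSet_Ioi.prod measurableSet_Ioo
  have hKm : MeasurableSet K := measurableSet_Icc.prod measurableSet_Icc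
  have h1 : IntegrableOn f K := hf.locallyIntegrable.integrableOn_isCompact (isCompact_Icc.prod isCompact_Icc)
  have h2 : IntegrableOn f (T ∩ K) := h1.mono_set inter_subset_right
  have h3 : IntegrableOn f (T \ K) := by
    refine (integrableOn_congr_fun ?_ (hTm.diff hKm)).mp (integrableOn_zero (ε' := ℝ))
    intro p hp
    rcases hp with ⟨hpT, hpK⟩
    rcases hpT with ⟨hp1, hp2⟩
    have hp2' : p.2 ∈ Icc (-π) π := ⟨le_of_lt hp2.1, le_of_lt hp2.2⟩
    have : p.1 ∉ Icc (-M') M' := by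
      intro h
      exact hpK ⟨h, hp2'⟩
    have hni : ¬(-M' ≤ p.1 ∧ p.1 ≤ M') := by simpa [mem_Icc] using this
    have : M' ≤ |p.1| := by
      rcases lt_or_ge p.1 (-M') with h | h
      · have h1 : M' ≤ -p.1 := by linarith
        exact h1.trans (neg_le_abs p.1)
      · have h2 : M' < p.1 := by
          by_contra hh
          push_neg at hh
          exact hni ⟨h, hh⟩
        exact h2.le.trans (le_abs_self _)
    exact (h0 p this).symm
  have := h2.union h3
  rwa [inter_union_diff] at this

lemma core (φ : ℂ → ℂ) (hφ : ContDiff ℝ (⊤ : ℕ∞) φ) (hc : HasCompactSupport φ) :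
    ∫ z : ℂ, ‖φ z‖ ^ 2 / ‖z‖ ≤ ∫ z : ℂ, 2 * ‖φ z‖ * ‖fderiv ℝ φ z‖ := by
  have hd : Differentiable ℝ φ := hφ.differentiable (by simp)
  have hφc : Continuous φ := hφ.continuous
  have hfc : Continuous (fderiv ℝ φ) := hφ.continuous_fderiv (by simp)
  obtain ⟨M, hM⟩ := hc.isCompact.isBounded.subset_closedBall 0
  set M' : ℝ := max M 0 + 1 with hM'def
  have hM'pos : 0 < M' := by positivity
  have hzero : ∀ z : ℂ, M' ≤ ‖z‖ → φ z = 0 := by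
    intro z hz
    apply image_eq_zero_of_notMem_tsupport
    intro hzt
    have h1 := hM hzt
    simp only [Metric.mem_closedBall, dist_zero_right] at h1
    have : ‖z‖ ≤ max M 0 := h1.trans (le_max_left _ _)
    linarith
  set c : ℝ → ℂ := fun θ => (Real.cos θ : ℂ) + (Real.sin θ : ℂ) * Complex.I with hcdef
  have hcexp : ∀ θ, c θ = Complex.exp (θ * Complex.I) := by
    intro θ
    rw [Complex.exp_mul_I, hcdef]
    simp [Complex.ofReal_cos, Complex.ofReal_sin]
  have hcnorm : ∀ θ, ‖c θ‖ = 1 := by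
    intro θ
    rw [hcexp θ, Complex.norm_exp_ofReal_mul_I]
  have hccont : Continuous c := by
    rw [hcdef]; fun_prop
  set S : ℝ × ℝ → ℂ := fun p => p.1 • c p.2 with hSdef
  have hSc : Continuous S := by
    rw [hSdef]; fun_prop
  have hSsymm : ∀ p : ℝ × ℝ, Complex.polarCoord.symm p = S p := by
    intro p
    rw [Complex.polarCoord_symm_apply, hSdef]
    simp only [hcdef]
    rw [Complex.real_smul]
  have hSnorm : ∀ p : ℝ × ℝ, ‖S p‖ = |p.1| := by
    intro p
    rw [hSdef]
    simp only [norm_smul, hcnorm, mul_one, Real.norm_eq_abs]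
  set A : ℝ × ℝ → ℝ := fun p => ‖φ (S p)‖ ^ 2 with hAdef
  set B : ℝ × ℝ → ℝ := fun p => p.1 * (2 * ‖φ (S p)‖ * ‖fderiv ℝ φ (S p)‖) with hBdef
  have hAc : Continuous A := by
    rw [hAdef]; exact (hφc.comp hSc).norm.pow 2
  have hBc : Continuous B := by
    rw [hBdef]
    exact continuous_fst.mul ((continuous_const.mul (hφc.comp hSc).norm).mul
      ((hfc.comp hSc).norm))
  have hTm : MeasurableSet (Ioi (0:ℝ) ×ˢ Ioo (-π) π) :=
    measurableSet_Ioi.prod measurableSet_Ioo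
  -- step 1
  have step1 : ∫ z : ℂ, ‖φ z‖ ^ 2 / ‖z‖ = ∫ p in Ioi (0:ℝ) ×ˢ Ioo (-π) π, A p := by
    rw [← Complex.integral_comp_polarCoord_symm (fun z => ‖φ z‖ ^ 2 / ‖z‖), polarCoord_target]
    apply setIntegral_congr_fun hTm
    intro p hp
    have hp1 : 0 < p.1 := hp.1
    show p.1 • (‖φ (Complex.polarCoord.symm p)‖ ^ 2 / ‖Complex.polarCoord.symm p‖) = A p
    rw [hSsymm p, hSnorm p, abs_of_pos hp1, smul_eq_mul, hAdef, mul_comm,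
      div_mul_cancel₀ _ hp1.ne']
  have step2 : ∫ z : ℂ, 2 * ‖φ z‖ * ‖fderiv ℝ φ z‖ = ∫ p in Ioi (0:ℝ) ×ˢ Ioo (-π) π, B p := by
    rw [← Complex.integral_comp_polarCoord_symm (fun z => 2 * ‖φ z‖ * ‖fderiv ℝ φ z‖),
      polarCoord_target]
    apply setIntegral_congr_fun hTm
    intro p hp
    show p.1 • (2 * ‖φ (Complex.polarCoord.symm p)‖ * ‖fderiv ℝ φ (Complex.polarCoord.symm p)‖)
      = B p
    rw [hSsymm p, smul_eq_mul, hBdef]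
  -- integrability of B on the strip
  have hBzero : ∀ p : ℝ × ℝ, M' ≤ |p.1| → B p = 0 := by
    intro p hp
    have : φ (S p) = 0 := hzero (S p) (by rw [hSnorm]; exact hp)
    rw [hBdef]
    simp [this]
  have hBint : IntegrableOn B (Ioi (0:ℝ) ×ˢ Ioo (-π) π) := integrableOn_strip hBc M' hBzero
  -- lintegral inequality
  have hlin : (∫⁻ p in Ioi (0:ℝ) ×ˢ Ioo (-π) π, ENNReal.ofReal (A p)) ≤
      ∫⁻ p in Ioi (0:ℝ) ×ˢ Ioo (-π) π, ENNReal.ofReal (B p) := by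
    have hmulA : AEMeasurable (fun p => ENNReal.ofReal (A p))
        ((volume.restrict (Ioi (0:ℝ))).prod (volume.restrict (Ioo (-π) π))) :=
      (hAc.measurable.ennreal_ofReal).aemeasurable
    have hmulB : AEMeasurable (fun p => ENNReal.ofReal (B p))
        ((volume.restrict (Ioi (0:ℝ))).prod (volume.restrict (Ioo (-π) π))) :=
      (hBc.measurable.ennreal_ofReal).aemeasurable
    have hrestrict : (volume : Measure (ℝ × ℝ)).restrict (Ioi (0:ℝ) ×ˢ Ioo (-π) π)
        = (volume.restrict (Ioi (0:ℝ))).prod (volume.restrict (Ioo (-π) π)) := by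
      rw [Measure.prod_restrict, ← Measure.volume_eq_prod]
    rw [hrestrict]
    rw [lintegral_prod_symm _ hmulA, lintegral_prod_symm _ hmulB]
    apply lintegral_mono
    intro θ
    -- 1D reduction at fixed angle θ
    set u : ℝ → ℂ := fun t => φ (S (t, θ)) with hudef
    set U : ℝ → ℂ := fun s => fderiv ℝ φ (S (s, θ)) (c θ) with hUdef
    have hu : ∀ r, HasDerivAt u (U r) r := by
      intro r
      have h1 : HasDerivAt (fun t : ℝ => t • c θ) (c θ) r := by
        simpa using (hasDerivAt_id r).smul_const (c θ)
      have h2 : HasFDerivAt φ (fderiv ℝ φ (r • c θ)) (r • c θ) := (hd _).hasFDerivAt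
      exact h2.comp_hasDerivAt r h1
    have huc : Continuous u := hφc.comp (hSc.comp (continuous_id.prodMk continuous_const))
    have hUc : Continuous U := by
      rw [hUdef]
      exact (hfc.comp (hSc.comp (continuous_id.prodMk continuous_const))).clm_apply
        continuous_const
    have hMu : ∀ r, M' ≤ r → u r = 0 := by
      intro r hr
      apply hzero
      rw [hSnorm]
      exact hr.trans (le_abs_self r)
    calc ∫⁻ r in Ioi (0:ℝ), ENNReal.ofReal (A (r, θ))
        ≤ ∫⁻ r in Ioi (0:ℝ), ∫⁻ s in Ioi r, ENNReal.ofReal (2 * ‖u s‖ * ‖U s‖) :=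
          lintegral_mono fun r => oneD u U M' hu hUc huc hMu r
      _ = ∫⁻ s in Ioi (0:ℝ), ENNReal.ofReal s * ENNReal.ofReal (2 * ‖u s‖ * ‖U s‖) :=
          swap_lemma _ (((continuous_const.mul huc.norm).mul hUc.norm).measurable.ennreal_ofReal)
      _ ≤ ∫⁻ s in Ioi (0:ℝ), ENNReal.ofReal (B (s, θ)) := by
          apply setLIntegral_mono
            ((hBc.comp (continuous_id.prodMk continuous_const)).measurable.ennreal_ofReal)
          intro s hs
          rw [← ENNReal.ofReal_mul (le_of_lt hs)]
          apply ENNReal.ofReal_le_ofReal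
          show s * (2 * ‖u s‖ * ‖U s‖) ≤ B (s, θ)
          have hUb : ‖U s‖ ≤ ‖fderiv ℝ φ (S (s, θ))‖ := by
            rw [hUdef]
            calc ‖fderiv ℝ φ (S (s, θ)) (c θ)‖
                ≤ ‖fderiv ℝ φ (S (s, θ))‖ * ‖c θ‖ := ContinuousLinearMap.le_opNorm _ _
              _ = ‖fderiv ℝ φ (S (s, θ))‖ := by rw [hcnorm, mul_one]
          rw [hBdef]
          show s * (2 * ‖u s‖ * ‖U s‖) ≤ s * (2 * ‖φ (S (s, θ))‖ * ‖fderiv ℝ φ (S (s, θ))‖)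
          have hus : ‖u s‖ = ‖φ (S (s, θ))‖ := by rw [hudef]
          rw [← hus]
          have h0s : (0:ℝ) ≤ s := le_of_lt hs
          have h0u : (0:ℝ) ≤ ‖u s‖ := norm_nonneg _
          gcongr
  -- final assembly
  rw [step1, step2]
  have e1 : ∫ p in Ioi (0:ℝ) ×ˢ Ioo (-π) π, A p
      = (∫⁻ p in Ioi (0:ℝ) ×ˢ Ioo (-π) π, ENNReal.ofReal (A p)).toReal :=
    integral_eq_lintegral_of_nonneg_ae (Filter.Eventually.of_forall fun p => sq_nonneg _)
      (hAc.aestronglyMeasurable.restrict)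
  have e2 : ∫ p in Ioi (0:ℝ) ×ˢ Ioo (-π) π, B p
      = (∫⁻ p in Ioi (0:ℝ) ×ˢ Ioo (-π) π, ENNReal.ofReal (B p)).toReal :=
    integral_eq_lintegral_of_nonneg_ae ((ae_restrict_iff' hTm).mpr
      (Filter.Eventually.of_forall fun p hp => by
        rw [hBdef]
        have hp1 : (0:ℝ) ≤ p.1 := le_of_lt hp.1
        positivity))
      (hBc.aestronglyMeasurable.restrict)
  rw [e1, e2]
  exact ENNReal.toReal_mono hBint.lintegral_lt_top.ne hlin

lemma amgm {t : ℝ} (ht : 0 < t) (a b : ℝ) : 2 * a * b ≤ (1 / t) * a ^ 2 + t * b ^ 2 := by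
  have h : 0 ≤ (1 / t) * (a - t * b) ^ 2 := by positivity
  have he : (1 / t) * (a - t * b) ^ 2 = (1 / t) * a ^ 2 + t * b ^ 2 - 2 * a * b := by
    field_simp
    ring
  linarith [he ▸ h]

/-- Splitting with a radial cutoff and the Hardy–Poincaré inequality gives, for every
`ψ ∈ C_c^∞(ℝ²)` and `R₂ > 0` (with `R₁ = R₂/2`):
`∫ |ψ|²/|x| ≤ 16 R₂ ∫ |∇ψ|² + (68/R₂) ∫ |ψ|²`. -/
theorem stmt_8 (R₂ : ℝ) (hR₂ : 0 < R₂)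
    (ψ : EuclideanSpace ℝ (Fin 2) → ℂ)
    (hψ : ContDiff ℝ (⊤ : ℕ∞) ψ) (hcs : HasCompactSupport ψ) :
    (∫ x : EuclideanSpace ℝ (Fin 2), ‖ψ x‖ ^ 2 / ‖x‖) ≤
      16 * R₂ * (∫ x : EuclideanSpace ℝ (Fin 2),
          ∑ i, ‖fderiv ℝ ψ x (EuclideanSpace.single i 1)‖ ^ 2) +
        (68 / R₂) * ∫ x : EuclideanSpace ℝ (Fin 2), ‖ψ x‖ ^ 2 := by
  classical
  set L := Complex.orthonormalBasisOneI.repr with hLdef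
  have hLmp : MeasurePreserving Complex.orthonormalBasisOneI.measurableEquiv volume volume :=
    Complex.orthonormalBasisOneI.measurePreserving_measurableEquiv
  have hLemb : MeasurableEmbedding Complex.orthonormalBasisOneI.measurableEquiv :=
    Complex.orthonormalBasisOneI.measurableEquiv.measurableEmbedding
  have hcomp : ∀ F : EuclideanSpace ℝ (Fin 2) → ℝ, ∫ x, F x = ∫ z : ℂ, F (L z) := by
    intro F
    exact (hLmp.integral_comp hLemb F).symm
  set φ : ℂ → ℂ := fun z => ψ (L z) with hφdef
  set Lc : ℂ →L[ℝ] EuclideanSpace ℝ (Fin 2) :=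
    L.toContinuousLinearEquiv.toContinuousLinearMap with hLcdef
  have hLcd : ContDiff ℝ (⊤ : ℕ∞) (fun z : ℂ => L z) := Lc.contDiff
  have hφ : ContDiff ℝ (⊤ : ℕ∞) φ := hψ.comp hLcd
  have hφcs : HasCompactSupport φ := by
    have : φ = ψ ∘ L.toHomeomorph := rfl
    rw [this]
    exact hcs.comp_homeomorph L.toHomeomorph
  have hdψ : Differentiable ℝ ψ := hψ.differentiable (by simp)
  -- fderiv comparison
  have hfd : ∀ z : ℂ, ‖fderiv ℝ φ z‖ ≤ ‖fderiv ℝ ψ (L z)‖ := by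
    intro z
    have hL : HasFDerivAt (fun z : ℂ => L z) Lc z := Lc.hasFDerivAt
    have h1 : HasFDerivAt φ ((fderiv ℝ ψ (L z)).comp Lc) z :=
      (hdψ (L z)).hasFDerivAt.comp z hL
    rw [h1.fderiv]
    refine (ContinuousLinearMap.opNorm_comp_le _ _).trans ?_
    have : ‖Lc‖ ≤ 1 := by
      apply ContinuousLinearMap.opNorm_le_bound _ zero_le_one
      intro z
      rw [hLcdef]
      show ‖L z‖ ≤ 1 * ‖z‖
      rw [L.norm_map, one_mul]
    nlinarith [norm_nonneg (fderiv ℝ ψ (L z))]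
  -- continuity and support facts
  have hψc : Continuous ψ := hψ.continuous
  have hfψc : Continuous (fderiv ℝ ψ) := hψ.continuous_fderiv (by simp)
  have hfψcs : HasCompactSupport (fderiv ℝ ψ) := HasCompactSupport.fderiv (𝕜 := ℝ) hcs
  have hφc : Continuous φ := hφ.continuous
  have hfφc : Continuous (fderiv ℝ φ) := hφ.continuous_fderiv (by simp)
  have hfφcs : HasCompactSupport (fderiv ℝ φ) := HasCompactSupport.fderiv (𝕜 := ℝ) hφcs
  -- integrability
  have hI1 : Integrable (fun x => ‖ψ x‖ ^ 2) :=
    (hψc.norm.pow 2).integrable_of_hasCompactSupport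
      (hcs.comp_left (g := fun z : ℂ => ‖z‖ ^ 2) (by simp) :)
  have hIQ : Integrable (fun x : EuclideanSpace ℝ (Fin 2) =>
      ∑ i, ‖fderiv ℝ ψ x (EuclideanSpace.single i 1)‖ ^ 2) := by
    apply MeasureTheory.integrable_finset_sum
    intro i _
    apply Continuous.integrable_of_hasCompactSupport
    · exact ((hfψc.clm_apply continuous_const).norm.pow 2)
    · exact (hfψcs.comp_left (g := fun (T : EuclideanSpace ℝ (Fin 2) →L[ℝ] ℂ) =>
        ‖T (EuclideanSpace.single i 1)‖ ^ 2) (by simp) :)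
  have hIφ2 : Integrable (fun z : ℂ => ‖φ z‖ ^ 2) :=
    (hφc.norm.pow 2).integrable_of_hasCompactSupport
      (hφcs.comp_left (g := fun z : ℂ => ‖z‖ ^ 2) (by simp) :)
  have hIfφ2 : Integrable (fun z : ℂ => ‖fderiv ℝ φ z‖ ^ 2) :=
    (hfφc.norm.pow 2).integrable_of_hasCompactSupport
      (hfφcs.comp_left (g := fun T : ℂ →L[ℝ] ℂ => ‖T‖ ^ 2) (by simp) :)
  have hI2φ : Integrable (fun z : ℂ => 2 * ‖φ z‖ * ‖fderiv ℝ φ z‖) := by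
    apply Continuous.integrable_of_hasCompactSupport
    · exact (continuous_const.mul hφc.norm).mul hfφc.norm
    · apply HasCompactSupport.mul_right
      exact (hφcs.comp_left (g := fun z : ℂ => 2 * ‖z‖) (by simp) :)
  have hIQL : Integrable (fun z : ℂ =>
      ∑ i, ‖fderiv ℝ ψ (L z) (EuclideanSpace.single i 1)‖ ^ 2) := by
    apply MeasureTheory.integrable_finset_sum
    intro i _
    apply Continuous.integrable_of_hasCompactSupport
    · exact (((hfψc.comp L.continuous).clm_apply continuous_const).norm.pow 2)
    · apply HasCompactSupport.comp_left (g := fun (T : EuclideanSpace ℝ (Fin 2) →L[ℝ] ℂ) =>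
        ‖T (EuclideanSpace.single i 1)‖ ^ 2) _ (by simp)
      have : (fun z : ℂ => fderiv ℝ ψ (L z)) = (fderiv ℝ ψ) ∘ L.toHomeomorph := rfl
      rw [this]
      exact hfψcs.comp_homeomorph L.toHomeomorph
  -- main chain
  have key := core φ hφ hφcs
  have t1 : ∫ x : EuclideanSpace ℝ (Fin 2), ‖ψ x‖ ^ 2 / ‖x‖ = ∫ z : ℂ, ‖φ z‖ ^ 2 / ‖z‖ := by
    rw [hcomp (fun x => ‖ψ x‖ ^ 2 / ‖x‖)]
    congr 1
    funext z
    rw [L.norm_map]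
  have t2 : ∫ z : ℂ, 2 * ‖φ z‖ * ‖fderiv ℝ φ z‖ ≤
      ∫ z : ℂ, ((1 / (16 * R₂)) * ‖φ z‖ ^ 2 + (16 * R₂) * ‖fderiv ℝ φ z‖ ^ 2) := by
    apply integral_mono hI2φ ((hIφ2.const_mul _).add (hIfφ2.const_mul _))
    intro z
    exact amgm (by positivity) _ _
  have t3 : ∫ z : ℂ, ((1 / (16 * R₂)) * ‖φ z‖ ^ 2 + (16 * R₂) * ‖fderiv ℝ φ z‖ ^ 2)
      = (1 / (16 * R₂)) * (∫ z : ℂ, ‖φ z‖ ^ 2) + (16 * R₂) * ∫ z : ℂ, ‖fderiv ℝ φ z‖ ^ 2 := by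
    rw [integral_add (hIφ2.const_mul _) (hIfφ2.const_mul _), integral_const_mul,
      integral_const_mul]
  have t4 : ∫ z : ℂ, ‖fderiv ℝ φ z‖ ^ 2 ≤
      ∫ x : EuclideanSpace ℝ (Fin 2), ∑ i, ‖fderiv ℝ ψ x (EuclideanSpace.single i 1)‖ ^ 2 := by
    rw [hcomp (fun x => ∑ i, ‖fderiv ℝ ψ x (EuclideanSpace.single i 1)‖ ^ 2)]
    apply integral_mono hIfφ2 hIQL
    intro z
    calc ‖fderiv ℝ φ z‖ ^ 2 ≤ ‖fderiv ℝ ψ (L z)‖ ^ 2 :=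
          pow_le_pow_left₀ (norm_nonneg _) (hfd z) 2
      _ ≤ _ := opnorm_sq_le _
  have t5 : ∫ z : ℂ, ‖φ z‖ ^ 2 = ∫ x : EuclideanSpace ℝ (Fin 2), ‖ψ x‖ ^ 2 :=
    (hcomp (fun x => ‖ψ x‖ ^ 2)).symm
  have hQnn : 0 ≤ ∫ x : EuclideanSpace ℝ (Fin 2),
      ∑ i, ‖fderiv ℝ ψ x (EuclideanSpace.single i 1)‖ ^ 2 :=
    integral_nonneg fun x => Finset.sum_nonneg fun i _ => sq_nonneg _
  have hψnn : 0 ≤ ∫ x : EuclideanSpace ℝ (Fin 2), ‖ψ x‖ ^ 2 :=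
    integral_nonneg fun x => sq_nonneg _
  have hcoef : (1 : ℝ) / (16 * R₂) ≤ 68 / R₂ := by
    rw [div_le_div_iff₀ (by positivity) hR₂]
    nlinarith
  calc ∫ x : EuclideanSpace ℝ (Fin 2), ‖ψ x‖ ^ 2 / ‖x‖
      = ∫ z : ℂ, ‖φ z‖ ^ 2 / ‖z‖ := t1
    _ ≤ ∫ z : ℂ, 2 * ‖φ z‖ * ‖fderiv ℝ φ z‖ := key
    _ ≤ (1 / (16 * R₂)) * (∫ z : ℂ, ‖φ z‖ ^ 2) + (16 * R₂) * ∫ z : ℂ, ‖fderiv ℝ φ z‖ ^ 2 :=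
        t2.trans_eq t3
    _ ≤ 16 * R₂ * (∫ x : EuclideanSpace ℝ (Fin 2),
          ∑ i, ‖fderiv ℝ ψ x (EuclideanSpace.single i 1)‖ ^ 2) +
        (68 / R₂) * ∫ x : EuclideanSpace ℝ (Fin 2), ‖ψ x‖ ^ 2 := by
        rw [t5]
        have h1 : (16 * R₂) * ∫ z : ℂ, ‖fderiv ℝ φ z‖ ^ 2 ≤ 16 * R₂ * (∫ x : EuclideanSpace ℝ (Fin 2),
            ∑ i, ‖fderiv ℝ ψ x (EuclideanSpace.single i 1)‖ ^ 2) := by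
          apply mul_le_mul_of_nonneg_left t4 (by positivity)
        have h2 : (1 / (16 * R₂)) * (∫ x : EuclideanSpace ℝ (Fin 2), ‖ψ x‖ ^ 2) ≤
            (68 / R₂) * ∫ x : EuclideanSpace ℝ (Fin 2), ‖ψ x‖ ^ 2 :=
          mul_le_mul_of_nonneg_right hcoef hψnn
        linarith
end
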